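/- arXiv:2012.08064 — 6 statements merged into one kernel-verified Lean document; each statement's English description precedes it below -/
import Mathlib

section
/- Under the standing setup, for every ℓ ∈ ℕ there exist constants C > 0 and γ > 0 such that h_k(εr)/h_ℓ(εr) ≤ C · ε^{max(k/2 − γ, 0)} · h_k(r)/h_ℓ(r) for all r > 0, all ε ∈ (0,1), and all integers k ≥ ℓ+1. -/
/-!
A positive quotient `f / g` of solutions of `f'' + (n - 1)/r f' = P f` and
`g'' + (n - 1)/r g' = Q g` with `Q ≤ P` is nondecreasing as soon as it vanishes at `0⁺`: the
weighted Wronskian `r ^ (n - 1) (f' g - f g')` is nondecreasing, and a negative value would make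
`f / g` decrease towards `0⁺`. For `h_k / h_ℓ` this gives the claim when `k` is small (exponent
`0`). Since `|V| ≤ Λ r⁻²`, the powers `r ^ a`, with potential `a (a + N - 2) r⁻²`, are barriers:
`r ^ U / h_ℓ` is nondecreasing for a large `U`, and so is `h_k / r ^ (k / 2)` for large `k`.
Chaining the two gives `h_k(εr)/h_ℓ(εr) ≤ ε ^ (k/2 - U) h_k(r)/h_ℓ(r)`.
-/

/-- `A^+_λ` from the paper. -/
noncomputable def Aplus (N : ℕ) (l : ℝ) : ℝ :=
  (-((N : ℝ) - 2) + Real.sqrt (((N : ℝ) - 2) ^ 2 + 4 * l)) / 2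

/-- `A^-_λ` from the paper. -/
noncomputable def Aminus (N : ℕ) (l : ℝ) : ℝ :=
  (-((N : ℝ) - 2) - Real.sqrt (((N : ℝ) - 2) ^ 2 + 4 * l)) / 2

/-- The eigenvalue `ω_k = k (N + k - 2)` of the Laplace–Beltrami operator on the sphere. -/
noncomputable def omegaEV (N k : ℕ) : ℝ := (k : ℝ) * ((N : ℝ) + (k : ℝ) - 2)

open Set Filter Topology

lemma monotoneOn_Ioi_of_hasDerivAt_mul_of_tendsto_zero {q w c : ℝ → ℝ}
    (hq : ∀ x > 0, HasDerivAt q (w x * c x) x) (hc : ∀ x > 0, 0 < c x)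
    (hw : MonotoneOn w (Ioi 0)) (hpos : ∀ x > 0, 0 < q x)
    (hlim : Tendsto q (𝓝[>] 0) (𝓝 0)) :
    MonotoneOn q (Ioi 0) := by
  have hcont : ContinuousOn q (Ioi 0) := fun x hx => (hq x hx).continuousAt.continuousWithinAt
  have hdiff : DifferentiableOn ℝ q (interior (Ioi 0)) := fun x hx =>
    (hq x (interior_subset hx)).differentiableAt.differentiableWithinAt
  have hw_nonneg : ∀ x > 0, 0 ≤ w x := by
    by_contra! ⟨x₁, hx₁, hwx₁⟩
    have hanti : AntitoneOn q (Ioc 0 x₁) := by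
      refine antitoneOn_of_deriv_nonpos (convex_Ioc 0 x₁) (hcont.mono Ioc_subset_Ioi_self)
        (hdiff.mono (interior_mono Ioc_subset_Ioi_self)) fun x hx => ?_
      rw [interior_Ioc] at hx
      rw [(hq x hx.1).deriv]
      exact mul_nonpos_of_nonpos_of_nonneg ((hw hx.1 hx₁ hx.2.le).trans hwx₁.le) (hc x hx.1).le
    have : q x₁ ≤ 0 := ge_of_tendsto hlim <| by
      filter_upwards [Ioc_mem_nhdsGT hx₁] with x hx
      exact hanti hx ⟨hx₁, le_rfl⟩ hx.2
    exact (hpos x₁ hx₁).not_ge this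
  refine monotoneOn_of_deriv_nonneg (convex_Ioi 0) hcont hdiff fun x hx => ?_
  rw [interior_Ioi] at hx
  rw [(hq x hx).deriv]
  exact mul_nonneg (hw_nonneg x hx) (hc x hx).le

lemma tendsto_rpow_nhdsGT_zero {a : ℝ} (ha : 0 < a) :
    Tendsto (fun r : ℝ => r ^ a) (𝓝[>] 0) (𝓝 0) := by
  simpa [Real.zero_rpow ha.ne'] using
    (Real.continuousAt_rpow_const 0 a (Or.inr ha.le)).tendsto.mono_left nhdsWithin_le_nhds

lemma tendsto_rpow_neg_mul_rpow_nhdsGT_zero (a : ℝ) :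
    Tendsto (fun r : ℝ => r ^ (-a) * r ^ a) (𝓝[>] 0) (𝓝 1) := by
  refine tendsto_const_nhds.congr' ?_
  filter_upwards [self_mem_nhdsWithin] with r (hr : 0 < r)
  rw [← Real.rpow_add hr, neg_add_cancel, Real.rpow_zero]

lemma tendsto_div_nhdsGT_zero_of_rpow_mul {f g : ℝ → ℝ} {a b cf cg : ℝ}
    (hf : Tendsto (fun r => r ^ (-a) * f r) (𝓝[>] 0) (𝓝 cf))
    (hg : Tendsto (fun r => r ^ (-b) * g r) (𝓝[>] 0) (𝓝 cg)) (hcg : cg ≠ 0) (hba : b < a) :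
    Tendsto (fun r => f r / g r) (𝓝[>] 0) (𝓝 0) := by
  have := ((hf.mul (tendsto_rpow_nhdsGT_zero (sub_pos.2 hba))).div hg hcg)
  rw [mul_zero, zero_div] at this
  refine this.congr' ?_
  filter_upwards [self_mem_nhdsWithin] with r (hr : 0 < r)
  have : r ^ (-a) * r ^ (a - b) = r ^ (-b) := by rw [← Real.rpow_add hr]; ring_nf
  simp only [Pi.div_apply]
  rw [mul_right_comm, this, mul_div_mul_left _ _ (Real.rpow_pos_of_pos hr _).ne']

lemma div_le_rpow_sub_mul_div_of_monotoneOn {f g : ℝ → ℝ} {a b : ℝ}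
    (hf : MonotoneOn (fun r => f r / r ^ a) (Ioi 0))
    (hg : MonotoneOn (fun r => r ^ b / g r) (Ioi 0))
    (hfpos : ∀ r > 0, 0 < f r) (hgpos : ∀ r > 0, 0 < g r) {r ε : ℝ} (hr : 0 < r) (hε : 0 < ε)
    (hε1 : ε ≤ 1) :
    f (ε * r) / g (ε * r) ≤ ε ^ (a - b) * (f r / g r) := by
  have hεr : 0 < ε * r := mul_pos hε hr
  have hle : ε * r ≤ r := mul_le_of_le_one_left hr.le hε1
  have h₁ := hf hεr hr hle
  have h₂ := hg hεr hr hle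
  simp only at h₁ h₂
  calc f (ε * r) / g (ε * r)
      = f (ε * r) / (ε * r) ^ a * ((ε * r) ^ b / g (ε * r)) * (ε * r) ^ (a - b) := by
        rw [Real.rpow_sub hεr]
        have := hgpos _ hεr
        have := Real.rpow_pos_of_pos hεr a
        have := Real.rpow_pos_of_pos hεr b
        field_simp
    _ ≤ f r / r ^ a * (r ^ b / g r) * (ε * r) ^ (a - b) := by
        gcongr
        · exact (div_pos (Real.rpow_pos_of_pos hεr b) (hgpos _ hεr)).le
        · exact (div_pos (hfpos _ hr) (Real.rpow_pos_of_pos hr a)).le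
    _ = ε ^ (a - b) * (f r / g r) := by
        rw [Real.mul_rpow hε.le hr.le, Real.rpow_sub hr]
        have := hgpos _ hr
        have := Real.rpow_pos_of_pos hr a
        have := Real.rpow_pos_of_pos hr b
        field_simp

/-- `f'' + (n - 1) / r * f' = P f` on `(0, ∞)`, with `f'` the derivative of `f`: the radial form
of `Δu = P u` in dimension `n`. -/
def SolvesRadialODE (n : ℝ) (P f f' : ℝ → ℝ) : Prop :=
  ∀ r > 0, HasDerivAt f (f' r) r ∧ HasDerivAt f' (P r * f r - (n - 1) / r * f' r) r

lemma solvesRadialODE_rpow (n a : ℝ) :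
    SolvesRadialODE n (fun r => a * (a + n - 2) * r ^ (-2 : ℝ)) (fun r => r ^ a)
      (fun r => a * r ^ (a - 1)) := by
  intro r hr
  refine ⟨Real.hasDerivAt_rpow_const (Or.inl hr.ne'),
    ((Real.hasDerivAt_rpow_const (Or.inl hr.ne')).const_mul a).congr_deriv ?_⟩
  have h₁ : r ^ (a - 1 - 1) = r ^ (-2 : ℝ) * r ^ a := by
    rw [← Real.rpow_add hr]; ring_nf
  have h₂ : r ^ (a - 1) = r ^ (-2 : ℝ) * r ^ a * r := by
    rw [← Real.rpow_add hr, ← Real.rpow_add_one hr.ne']; ring_nf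
  simp only [h₁, h₂]
  field_simp
  ring

lemma solvesRadialODE_of_contDiffOn {n : ℝ} {P f : ℝ → ℝ} (hf : ContDiffOn ℝ 2 f (Ioi 0))
    (hode : ∀ r > 0, deriv (deriv f) r + (n - 1) / r * deriv f r - P r * f r = 0) :
    SolvesRadialODE n P f (deriv f) := by
  intro r hr
  have hmem : Ioi (0 : ℝ) ∈ 𝓝 r := isOpen_Ioi.mem_nhds hr
  have hf' : ContDiffOn ℝ 1 (deriv f) (Ioi 0) := hf.deriv_of_isOpen isOpen_Ioi (by norm_num)
  refine ⟨((hf.differentiableOn (by norm_num)).differentiableAt hmem).hasDerivAt, ?_⟩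
  refine ((hf'.differentiableOn one_ne_zero).differentiableAt hmem).hasDerivAt.congr_deriv ?_
  linarith [hode r hr]

namespace SolvesRadialODE

variable {n a b c Λ : ℝ} {P Q f f' g g' : ℝ → ℝ}

lemma hasDerivAt_wronskian (hf : SolvesRadialODE n P f f') (hg : SolvesRadialODE n Q g g')
    {r : ℝ} (hr : 0 < r) :
    HasDerivAt (fun x => x ^ (n - 1) * (f' x * g x - f x * g' x))
      (r ^ (n - 1) * ((P r - Q r) * (f r * g r))) r := by
  have hpow : HasDerivAt (fun x : ℝ => x ^ (n - 1)) ((n - 1) * r ^ (n - 1 - 1)) r :=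
    Real.hasDerivAt_rpow_const (Or.inl hr.ne')
  refine (hpow.mul (((hf r hr).2.mul (hg r hr).1).sub ((hf r hr).1.mul (hg r hr).2)))
    |>.congr_deriv ?_
  simp only [Pi.mul_apply, Pi.sub_apply]
  rw [Real.rpow_sub hr, Real.rpow_one]
  field_simp
  ring

lemma monotoneOn_div (hf : SolvesRadialODE n P f f') (hg : SolvesRadialODE n Q g g')
    (hfpos : ∀ r > 0, 0 < f r) (hgpos : ∀ r > 0, 0 < g r) (hQP : ∀ r > 0, Q r ≤ P r)
    (hlim : Tendsto (fun r => f r / g r) (𝓝[>] 0) (𝓝 0)) :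
    MonotoneOn (fun r => f r / g r) (Ioi 0) := by
  have hW : MonotoneOn (fun x => x ^ (n - 1) * (f' x * g x - f x * g' x)) (Ioi 0) := by
    refine monotoneOn_of_deriv_nonneg (convex_Ioi 0)
      (fun r hr => (hasDerivAt_wronskian hf hg hr).continuousAt.continuousWithinAt)
      (fun r hr => (hasDerivAt_wronskian hf hg (interior_subset hr)).differentiableAt
        |>.differentiableWithinAt) fun r hr => ?_
    rw [interior_Ioi] at hr
    rw [(hasDerivAt_wronskian hf hg hr).deriv]
    exact mul_nonneg (Real.rpow_nonneg hr.le _)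
      (mul_nonneg (sub_nonneg.2 (hQP r hr)) (mul_pos (hfpos r hr) (hgpos r hr)).le)
  refine monotoneOn_Ioi_of_hasDerivAt_mul_of_tendsto_zero
    (c := fun x => (x ^ (n - 1) * g x ^ 2)⁻¹) (fun r hr => ?_)
    (fun r hr => by have := hgpos r hr; have := Real.rpow_pos_of_pos hr (n - 1); positivity) hW
    (fun r hr => div_pos (hfpos r hr) (hgpos r hr)) hlim
  refine ((hf r hr).1.div (hg r hr).1 (hgpos r hr).ne').congr_deriv ?_
  have := Real.rpow_pos_of_pos hr (n - 1)
  field_simp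

lemma monotoneOn_rpow_div (hf : SolvesRadialODE n P f f') (hfpos : ∀ r > 0, 0 < f r)
    (hP : ∀ r > 0, P r ≤ a * (a + n - 2) * r ^ (-2 : ℝ))
    (hf₀ : Tendsto (fun r => r ^ (-b) * f r) (𝓝[>] 0) (𝓝 c)) (hc : c ≠ 0) (hba : b < a) :
    MonotoneOn (fun r => r ^ a / f r) (Ioi 0) :=
  (solvesRadialODE_rpow n a).monotoneOn_div hf (fun _ hr => Real.rpow_pos_of_pos hr a) hfpos hP
    (tendsto_div_nhdsGT_zero_of_rpow_mul (tendsto_rpow_neg_mul_rpow_nhdsGT_zero a) hf₀ hc hba)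

lemma monotoneOn_div_rpow (hf : SolvesRadialODE n P f f') (hfpos : ∀ r > 0, 0 < f r)
    (hP : ∀ r > 0, a * (a + n - 2) * r ^ (-2 : ℝ) ≤ P r)
    (hf₀ : Tendsto (fun r => r ^ (-b) * f r) (𝓝[>] 0) (𝓝 c)) (hab : a < b) :
    MonotoneOn (fun r => f r / r ^ a) (Ioi 0) :=
  hf.monotoneOn_div (solvesRadialODE_rpow n a) hfpos (fun _ hr => Real.rpow_pos_of_pos hr a) hP
    (tendsto_div_nhdsGT_zero_of_rpow_mul hf₀ (tendsto_rpow_neg_mul_rpow_nhdsGT_zero a)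
      one_ne_zero hab)

lemma exists_monotoneOn_rpow_div (hn : 2 ≤ n) (hf : SolvesRadialODE n P f f')
    (hfpos : ∀ r > 0, 0 < f r) (hP : ∀ r > 0, P r ≤ Λ * r ^ (-2 : ℝ))
    (hf₀ : Tendsto (fun r => r ^ (-b) * f r) (𝓝[>] 0) (𝓝 c)) (hc : c ≠ 0) :
    ∃ U : ℝ, 0 ≤ U ∧ MonotoneOn (fun r => r ^ U / f r) (Ioi 0) := by
  -- `U := |Λ| + |b| + 1 ≥ 1` gives `U (U + n - 2) ≥ U ≥ Λ`, and `U > b`.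
  have hΛ : Λ ≤ (|Λ| + |b| + 1) * (|Λ| + |b| + 1 + n - 2) := by
    nlinarith [le_abs_self Λ, abs_nonneg Λ, abs_nonneg b]
  refine ⟨|Λ| + |b| + 1, by positivity, hf.monotoneOn_rpow_div hfpos (fun r hr => ?_) hf₀ hc
    (by linarith [le_abs_self b, abs_nonneg Λ])⟩
  exact (hP r hr).trans (mul_le_mul_of_nonneg_right hΛ (Real.rpow_nonneg hr.le _))

end SolvesRadialODE

lemma abs_le_add_mul_of_abs_sub_le {v l K s t : ℝ} (hK : 0 ≤ K) (ht : 0 ≤ t) (hts : t ≤ s)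
    (hv : |v - l * s| ≤ K * t) : |v| ≤ (|l| + K) * s := by
  have hs : 0 ≤ s := ht.trans hts
  calc |v| ≤ |v - l * s| + |l * s| := by linarith [abs_sub_abs_le_abs_sub v (l * s)]
    _ ≤ K * s + |l| * s := by
        rw [abs_mul, abs_of_nonneg hs]
        gcongr
        exact hv.trans (by gcongr)
    _ = (|l| + K) * s := by ring

lemma abs_le_mul_rpow_neg_two {V : ℝ → ℝ} {lam1 lam2 ρ1 ρ2 K : ℝ} (hK : 0 ≤ K) (hρ1 : 0 ≤ ρ1)
    (hρ2 : 0 ≤ ρ2)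
    (hV0 : ∀ r : ℝ, 0 < r → r ≤ 1 → |V r - lam1 * r ^ (-2 : ℝ)| ≤ K * r ^ (-2 + ρ1))
    (hVinf : ∀ r : ℝ, 1 ≤ r → |V r - lam2 * r ^ (-2 : ℝ)| ≤ K * r ^ (-2 - ρ2)) :
    ∀ r > 0, |V r| ≤ (max |lam1| |lam2| + K) * r ^ (-2 : ℝ) := by
  intro r hr
  rcases le_or_gt r 1 with hr1 | hr1
  · refine (abs_le_add_mul_of_abs_sub_le hK (Real.rpow_nonneg hr.le _)
      (Real.rpow_le_rpow_of_exponent_ge hr hr1 (by linarith)) (hV0 r hr hr1)).trans ?_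
    gcongr
    exact le_max_left _ _
  · refine (abs_le_add_mul_of_abs_sub_le hK (Real.rpow_nonneg hr.le _)
      (Real.rpow_le_rpow_of_exponent_le hr1.le (by linarith)) (hVinf r hr1.le)).trans ?_
    gcongr
    exact le_max_right _ _

lemma add_mul_le_mul_of_abs_le {v Λ ω c s : ℝ} (hs : 0 ≤ s) (hv : |v| ≤ Λ * s)
    (h : Λ + ω ≤ c) : v + ω * s ≤ c * s := by
  nlinarith [le_of_abs_le hv]

lemma mul_le_add_mul_of_abs_le {v Λ ω c s : ℝ} (hs : 0 ≤ s) (hv : |v| ≤ Λ * s)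
    (h : c + Λ ≤ ω) : c * s ≤ v + ω * s := by
  nlinarith [neg_le_of_abs_le hv]

lemma omegaEV_strictMono {N : ℕ} (hN : 2 ≤ N) : StrictMono (omegaEV N) := by
  intro j k hjk
  have : (j : ℝ) + 1 ≤ k := by exact_mod_cast hjk
  have : (2 : ℝ) ≤ N := by exact_mod_cast hN
  unfold omegaEV
  nlinarith [(Nat.cast_nonneg j : (0 : ℝ) ≤ j)]

lemma omegaEV_nonneg {N : ℕ} (hN : 2 ≤ N) (k : ℕ) : 0 ≤ omegaEV N k := by
  simpa [omegaEV] using (omegaEV_strictMono hN).monotone k.zero_le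

lemma le_Aplus {N : ℕ} {l x : ℝ} (hxl : x * (x + ((N : ℝ) - 2)) ≤ l) : x ≤ Aplus N l := by
  have : 2 * x + ((N : ℝ) - 2) ≤ √(((N : ℝ) - 2) ^ 2 + 4 * l) :=
    Real.le_sqrt_of_sq_le (by nlinarith)
  unfold Aplus
  linarith

lemma Aplus_lt_Aplus {N : ℕ} {l₁ l₂ : ℝ} (hl₁ : -((N : ℝ) - 2) ^ 2 / 4 ≤ l₁) (hl : l₁ < l₂) :
    Aplus N l₁ < Aplus N l₂ := by
  have := Real.sqrt_lt_sqrt (by linarith)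
    (by linarith : ((N : ℝ) - 2) ^ 2 + 4 * l₁ < ((N : ℝ) - 2) ^ 2 + 4 * l₂)
  unfold Aplus
  linarith

lemma half_lt_Aplus_add_omegaEV {N k : ℕ} {l : ℝ} (hN : 2 ≤ N) (hl : -((N : ℝ) - 2) ^ 2 / 4 ≤ l)
    (hk : (N : ℝ) - 2 < k) : (k : ℝ) / 2 < Aplus N (l + omegaEV N k) := by
  have : (2 : ℝ) ≤ N := by exact_mod_cast hN
  have : (k : ℝ) - ((N : ℝ) - 2) / 2 ≤ Aplus N (l + omegaEV N k) := by
    apply le_Aplus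
    unfold omegaEV
    nlinarith [(Nat.cast_nonneg k : (0 : ℝ) ≤ k)]
  linarith

lemma half_mul_add_le_omegaEV {N k : ℕ} {Λ : ℝ} (hN : 2 ≤ N) (hk : 2 ≤ (k : ℝ)) (hΛ : Λ ≤ k) :
    (k : ℝ) / 2 * ((k : ℝ) / 2 + N - 2) + Λ ≤ omegaEV N k := by
  have : (2 : ℝ) ≤ N := by exact_mod_cast hN
  unfold omegaEV
  nlinarith

theorem stmt_5_general
    (N : ℕ) (hN : 2 ≤ N) (m : ℕ)
    (V : ℝ → ℝ) (lam1 lam2 ρ1 ρ2 K : ℝ)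
    (hlam1 : -((N : ℝ) - 2) ^ 2 / 4 ≤ lam1)
    (hρ1 : 0 < ρ1) (hρ2 : 0 < ρ2) (hK : 0 < K)
    (hV0 : ∀ r : ℝ, 0 < r → r ≤ 1 → |V r - lam1 * r ^ (-2 : ℝ)| ≤ K * r ^ (-2 + ρ1))
    (hVinf : ∀ r : ℝ, 1 ≤ r → |V r - lam2 * r ^ (-2 : ℝ)| ≤ K * r ^ (-2 - ρ2))
    (h : ℕ → ℝ → ℝ)
    (hpos : ∀ k : ℕ, ∀ r : ℝ, 0 < r → 0 < h k r)
    (hsmooth : ∀ k : ℕ, ContDiffOn ℝ (m + 2) (h k) (Set.Ioi 0))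
    (hODE : ∀ k : ℕ, ∀ r : ℝ, 0 < r →
      deriv (deriv (h k)) r + ((N : ℝ) - 1) / r * deriv (h k) r
        - (V r + omegaEV N k * r ^ (-2 : ℝ)) * h k r = 0)
    (hzero : ∀ k : ℕ, Filter.Tendsto
      (fun r : ℝ => r ^ (-(Aplus N (lam1 + omegaEV N k))) * h k r)
      (nhdsWithin 0 (Set.Ioi 0)) (nhds 1))
    (ℓ : ℕ) :
    ∃ C : ℝ, 0 < C ∧ ∃ γ : ℝ, 0 < γ ∧
      ∀ r : ℝ, 0 < r → ∀ ε : ℝ, 0 < ε → ε < 1 → ∀ k : ℕ, ℓ + 1 ≤ k →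
        h k (ε * r) / h ℓ (ε * r)
          ≤ C * ε ^ max ((k : ℝ) / 2 - γ) 0 * (h k r / h ℓ r) := by
  have hsol (k : ℕ) :
      SolvesRadialODE N (fun r => V r + omegaEV N k * r ^ (-2 : ℝ)) (h k) (deriv (h k)) :=
    solvesRadialODE_of_contDiffOn ((hsmooth k).of_le (by norm_cast; omega)) (hODE k)
  have hV := abs_le_mul_rpow_neg_two hK.le hρ1.le hρ2.le hV0 hVinf
  set Λ := max |lam1| |lam2| + K
  have hΛ : 0 ≤ Λ := by positivity
  have hN2 : (2 : ℝ) ≤ N := by exact_mod_cast hN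
  obtain ⟨U, hU, hUℓ⟩ := (hsol ℓ).exists_monotoneOn_rpow_div hN2 (hpos ℓ)
    (fun r hr => add_mul_le_mul_of_abs_le (Real.rpow_nonneg hr.le _) (hV r hr) le_rfl)
    (hzero ℓ) one_ne_zero
  refine ⟨1, one_pos, U + Λ + N, by positivity, fun r hr ε hε hε1 k hk => ?_⟩
  rw [one_mul]
  rcases lt_or_ge (k : ℝ) (2 * (U + Λ + N)) with hk_small | hk_large
  · rw [max_eq_right (by linarith), Real.rpow_zero, one_mul]
    have hωk := omegaEV_strictMono hN (Nat.lt_of_succ_le hk)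
    exact (hsol k).monotoneOn_div (hsol ℓ) (hpos k) (hpos ℓ)
      (fun r hr => by have := Real.rpow_nonneg hr.le (-2 : ℝ); gcongr)
      (tendsto_div_nhdsGT_zero_of_rpow_mul (hzero k) (hzero ℓ) one_ne_zero
        (Aplus_lt_Aplus (by linarith [omegaEV_nonneg hN ℓ]) (by linarith)))
      (mul_pos hε hr) hr (mul_le_of_le_one_left hr.le hε1.le)
  · have hk_mono : MonotoneOn (fun r => h k r / r ^ ((k : ℝ) / 2)) (Ioi 0) :=
      (hsol k).monotoneOn_div_rpow (hpos k)
        (fun r hr => mul_le_add_mul_of_abs_le (Real.rpow_nonneg hr.le _) (hV r hr)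
          (half_mul_add_le_omegaEV hN (by linarith) (by linarith)))
        (hzero k) (half_lt_Aplus_add_omegaEV hN hlam1 (by linarith))
    calc h k (ε * r) / h ℓ (ε * r)
        ≤ ε ^ ((k : ℝ) / 2 - U) * (h k r / h ℓ r) :=
          div_le_rpow_sub_mul_div_of_monotoneOn hk_mono hUℓ (hpos k) (hpos ℓ) hr hε hε1.le
      _ ≤ ε ^ max ((k : ℝ) / 2 - (U + Λ + N)) 0 * (h k r / h ℓ r) :=
          mul_le_mul_of_nonneg_right
            (Real.rpow_le_rpow_of_exponent_ge hε hε1.le (max_le (by linarith) (by linarith)))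
            (div_pos (hpos k r hr) (hpos ℓ r hr)).le

/-- under the standing setup, for every `ℓ` there are `C > 0`, `γ > 0` with
`h_k(εr)/h_ℓ(εr) ≤ C ε^{max(k/2-γ,0)} h_k(r)/h_ℓ(r)` for all `r > 0`, `ε ∈ (0,1)`, `k ≥ ℓ+1`. -/
theorem stmt_5
    (N : ℕ) (hN : 2 ≤ N) (m : ℕ) (hm : 1 ≤ m)
    (V : ℝ → ℝ) (lam1 lam2 ρ1 ρ2 K : ℝ)
    (hlam1 : -((N : ℝ) - 2) ^ 2 / 4 ≤ lam1) (hlam2 : -((N : ℝ) - 2) ^ 2 / 4 ≤ lam2)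
    (hρ1 : 0 < ρ1) (hρ2 : 0 < ρ2) (hK : 0 < K)
    (hVsmooth : ContDiffOn ℝ m V (Set.Ioi 0))
    (hV0 : ∀ r : ℝ, 0 < r → r ≤ 1 → |V r - lam1 * r ^ (-2 : ℝ)| ≤ K * r ^ (-2 + ρ1))
    (hVinf : ∀ r : ℝ, 1 ≤ r → |V r - lam2 * r ^ (-2 : ℝ)| ≤ K * r ^ (-2 - ρ2))
    (hVderiv : ∀ ℓ : ℕ, 1 ≤ ℓ → ℓ ≤ m → ∃ M : ℝ, ∀ r : ℝ, 0 < r →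
      |r ^ (ℓ + 2) * iteratedDeriv ℓ V r| ≤ M)
    (A2 : ℕ → ℝ) (Bc : ℕ → ℕ)
    (hA2 : ∀ k : ℕ, 1 ≤ k → A2 k = Aplus N (lam2 + omegaEV N k) ∧ Bc k = 0)
    (hA20 : (A2 0 = Aplus N lam2 ∧
              ((lam2 = -((N : ℝ) - 2) ^ 2 / 4 ∧ Bc 0 = 1) ∨
               (-((N : ℝ) - 2) ^ 2 / 4 < lam2 ∧ Bc 0 = 0))) ∨
            (A2 0 = Aminus N lam2 ∧ Bc 0 = 0 ∧ -(N : ℝ) / 2 < A2 0))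
    (h : ℕ → ℝ → ℝ) (c : ℕ → ℝ)
    (hpos : ∀ k : ℕ, ∀ r : ℝ, 0 < r → 0 < h k r)
    (hsmooth : ∀ k : ℕ, ContDiffOn ℝ (m + 2) (h k) (Set.Ioi 0))
    (hODE : ∀ k : ℕ, ∀ r : ℝ, 0 < r →
      deriv (deriv (h k)) r + ((N : ℝ) - 1) / r * deriv (h k) r
        - (V r + omegaEV N k * r ^ (-2 : ℝ)) * h k r = 0)
    (hzero : ∀ k : ℕ, Filter.Tendsto
      (fun r : ℝ => r ^ (-(Aplus N (lam1 + omegaEV N k))) * h k r)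
      (nhdsWithin 0 (Set.Ioi 0)) (nhds 1))
    (hc : ∀ k : ℕ, 0 < c k)
    (hinfty : ∀ k : ℕ, Filter.Tendsto
      (fun r : ℝ => h k r / (r ^ A2 k * Real.log r ^ Bc k)) Filter.atTop (nhds (c k)))
    (ℓ : ℕ) :
    ∃ C : ℝ, 0 < C ∧ ∃ γ : ℝ, 0 < γ ∧
      ∀ r : ℝ, 0 < r → ∀ ε : ℝ, 0 < ε → ε < 1 → ∀ k : ℕ, ℓ + 1 ≤ k →
        h k (ε * r) / h ℓ (ε * r)
          ≤ C * ε ^ max ((k : ℝ) / 2 - γ) 0 * (h k r / h ℓ r) :=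
  stmt_5_general N hN m V lam1 lam2 ρ1 ρ2 K hlam1 hρ1 hρ2 hK hV0 hVinf h hpos hsmooth hODE hzero ℓ
end

section
/- Under the standing setup, there exists a constant C > 0 with the following property: for every pair (p,σ) with 1 ≤ p ≤ ∞, 1 ≤ σ ≤ ∞, σ = 1 if p = 1, σ = ∞ if p = ∞, and such that the function x ↦ h₀(|x|) restricted to the unit ball B(0,1) ⊂ ℝ^N has finite Lorentz quasinorm ‖·‖_{L^{p,σ}}, one has ‖x ↦ h₀(|x|)‖_{L^{p,σ}(B(0,√t))} ≥ C t^{N/(2p)} h₀(√t) for all t > 0 (with the convention N/(2p) = 0 when p = ∞); the constant C does not depend on (p,σ). -/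
/-!
Near `0` and near `∞`, `h₀` is comparable to the weights `r ^ A₁` and `r ^ A₂ (log r) ^ B`, which
satisfy `w (q u) ≥ c w u` for `q ∈ [1/2, 1]`; on compact subintervals of `(0, ∞)` the same holds
because `h₀` is continuous and positive. So `h₀ (|x|) ≥ c h₀ (√t)` on the annulus
`√t / 2 ≤ |x| < √t`, of measure `κ t ^ (N/2)`, and the decreasing rearrangement of `h₀ (|·|)`
truncated to `B(0, √t)` is at least `c h₀ (√t)` on `(0, κ t ^ (N/2))`. Evaluating the supremum at
the midpoint of that interval, or integrating `s ^ (σ/p - 1)` over it, bounds the Lorentz quasinorm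
from below; the constants are uniform in `(p, σ)` because `σ / p ≤ σ ≤ 2 ^ σ`.
-/

open MeasureTheory
open scoped ENNReal

/-- The non-increasing rearrangement `φ*` of a function `φ` on `ℝ^N`. -/
noncomputable def rearr (N : ℕ) (φ : EuclideanSpace ℝ (Fin N) → ℝ) (s : ℝ) : ℝ :=
  sInf {lam : ℝ | 0 < lam ∧ volume {x | lam < |φ x|} ≤ ENNReal.ofReal s}

/-- The Lorentz `L^{p,σ}` quasinorm of a function `φ` on `ℝ^N`, with
`p, σ ∈ [1,∞]` encoded as extended nonnegative reals. -/
noncomputable def lorentzNorm (N : ℕ) (p σ : ℝ≥0∞) (φ : EuclideanSpace ℝ (Fin N) → ℝ) :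
    ℝ≥0∞ :=
  let pe : ℝ := if p = ∞ then 0 else 1 / p.toReal
  if σ = ∞ then ⨆ s ∈ Set.Ioi (0 : ℝ), ENNReal.ofReal (s ^ pe * rearr N φ s)
  else (∫⁻ s in Set.Ioi (0 : ℝ),
    ENNReal.ofReal ((s ^ pe * rearr N φ s) ^ σ.toReal / s)) ^ (1 / σ.toReal)

/-- The Lorentz quasinorm of `φ` restricted to `Ω` (extension by zero). -/
noncomputable def lorentzNormOn (N : ℕ) (p σ : ℝ≥0∞)
    (Ω : Set (EuclideanSpace ℝ (Fin N))) (φ : EuclideanSpace ℝ (Fin N) → ℝ) : ℝ≥0∞ :=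
  lorentzNorm N p σ (Ω.indicator φ)

open Real Set Filter Topology Metric

def IsDoublingOn (f : ℝ → ℝ) (c : ℝ) (S : Set ℝ) : Prop :=
  ∀ u ∈ S, ∀ q ∈ Icc (1 / 2 : ℝ) 1, c * f u ≤ f (q * u)

namespace IsDoublingOn

variable {f g : ℝ → ℝ} {c d : ℝ} {S T : Set ℝ}

lemma mono (h : IsDoublingOn f c S) (hTS : T ⊆ S) : IsDoublingOn f c T :=
  fun u hu => h u (hTS hu)

lemma union_min (hS : IsDoublingOn f c S) (hT : IsDoublingOn f d T)
    (hf : ∀ u ∈ S ∪ T, 0 ≤ f u) : IsDoublingOn f (min c d) (S ∪ T) := by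
  rintro u hu q hq
  rcases hu with huS | huT
  · exact (mul_le_mul_of_nonneg_right (min_le_left c d) (hf u (.inl huS))).trans (hS u huS q hq)
  · exact (mul_le_mul_of_nonneg_right (min_le_right c d) (hf u (.inr huT))).trans (hT u huT q hq)

lemma mul (hf : IsDoublingOn f c S) (hg : IsDoublingOn g d S) (hc : 0 ≤ c) (hd : 0 ≤ d)
    (hf₀ : ∀ u ∈ S, 0 ≤ f u) (hg₀ : ∀ u ∈ S, 0 ≤ g u) :
    IsDoublingOn (fun r => f r * g r) (c * d) S := fun u hu q hq =>
  calc c * d * (f u * g u) = (c * f u) * (d * g u) := by ring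
    _ ≤ f (q * u) * g (q * u) :=
      mul_le_mul (hf u hu q hq) (hg u hu q hq) (mul_nonneg hd (hg₀ u hu))
        ((mul_nonneg hc (hf₀ u hu)).trans (hf u hu q hq))

lemma of_bounds {a b : ℝ} (hg : IsDoublingOn g c S) (ha : 0 ≤ a) (hb : 0 < b) (hc : 0 ≤ c)
    (hST : ∀ u ∈ S, ∀ q ∈ Icc (1 / 2 : ℝ) 1, q * u ∈ T)
    (hfg : ∀ r ∈ T, a * g r ≤ f r ∧ f r ≤ b * g r) :
    IsDoublingOn f (a * c / b) S := fun u hu q hq => by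
  have huT : u ∈ T := by simpa using hST u hu 1 ⟨by norm_num, le_rfl⟩
  calc a * c / b * f u ≤ a * c / b * (b * g u) := by
        gcongr
        exact (hfg u huT).2
    _ = a * (c * g u) := by field_simp
    _ ≤ a * g (q * u) := by
        gcongr
        exact hg u hu q hq
    _ ≤ f (q * u) := (hfg _ (hST u hu q hq)).1

end IsDoublingOn

lemma isDoublingOn_rpow (A : ℝ) :
    IsDoublingOn (fun r => r ^ A) (min ((1 / 2 : ℝ) ^ A) 1) (Ioi 0) := by
  rintro u (hu : 0 < u) q ⟨hq₁, hq₂⟩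
  have hq : 0 < q := by linarith
  show min _ 1 * u ^ A ≤ (q * u) ^ A
  rw [mul_rpow hq.le hu.le]
  gcongr
  rcases le_total 0 A with hA | hA
  · exact (min_le_left _ _).trans (rpow_le_rpow (by norm_num) hq₁ hA)
  · exact (min_le_right _ _).trans (one_le_rpow_of_pos_of_le_one_of_nonpos hq hq₂ hA)

lemma isDoublingOn_log_pow (B : ℕ) :
    IsDoublingOn (fun r => log r ^ B) ((1 / 2 : ℝ) ^ B) (Ici 4) := by
  rintro u (hu : 4 ≤ u) q ⟨hq₁, -⟩
  have hlog2 : 2 * log 2 ≤ log u :=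
    calc 2 * log 2 = log (2 ^ 2) := by rw [log_pow]; norm_num
      _ ≤ log u := log_le_log (by norm_num) (by norm_num; linarith)
  have hlogq : -log 2 ≤ log q := by
    rw [← log_inv]
    exact log_le_log (by norm_num) (by linarith)
  have hlog : log u / 2 ≤ log (q * u) := by
    rw [log_mul (by linarith) (by linarith)]
    linarith
  calc (1 / 2 : ℝ) ^ B * log u ^ B = (log u / 2) ^ B := by ring
    _ ≤ log (q * u) ^ B :=
        pow_le_pow_left₀ (by linarith [log_nonneg (by norm_num : (1:ℝ) ≤ 2)]) hlog B

section Asymptotics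

variable {f : ℝ → ℝ}

lemma eventually_bounds_of_tendsto_div {g : ℝ → ℝ} {l : Filter ℝ} {L : ℝ} (hL : 0 < L)
    (hg : ∀ᶠ r in l, 0 < g r) (h : Tendsto (fun r => f r / g r) l (𝓝 L)) :
    ∀ᶠ r in l, L / 2 * g r ≤ f r ∧ f r ≤ 2 * L * g r := by
  filter_upwards [hg, h (Ioo_mem_nhds (half_lt_self hL) (by linarith : L < 2 * L))]
    with r hgr hr
  rw [mem_preimage, mem_Ioo, lt_div_iff₀ hgr, div_lt_iff₀ hgr] at hr
  exact ⟨hr.1.le, hr.2.le⟩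

lemma exists_isDoublingOn_Ioo_of_tendsto {A L : ℝ} (hL : 0 < L)
    (h : Tendsto (fun r => r ^ (-A) * f r) (𝓝[>] 0) (𝓝 L)) :
    ∃ δ > 0, ∃ c > 0, IsDoublingOn f c (Ioo 0 δ) := by
  have hdiv : Tendsto (fun r => f r / r ^ A) (𝓝[>] 0) (𝓝 L) := h.congr' <| by
    filter_upwards [self_mem_nhdsWithin] with r (hr : 0 < r)
    rw [rpow_neg hr.le, inv_mul_eq_div]
  have hw : ∀ᶠ r in 𝓝[>] (0 : ℝ), 0 < r ^ A := by
    filter_upwards [self_mem_nhdsWithin] with r (hr : 0 < r) using rpow_pos_of_pos hr A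
  obtain ⟨δ, hδ, hbounds⟩ :=
    mem_nhdsGT_iff_exists_Ioo_subset.mp (eventually_bounds_of_tendsto_div hL hw hdiv)
  refine ⟨δ, hδ, _, ?_, ((isDoublingOn_rpow A).mono Ioo_subset_Ioi_self).of_bounds
    (half_pos hL).le (by positivity) (lt_min (by positivity) one_pos).le ?_ hbounds⟩
  · have := lt_min (rpow_pos_of_pos (by norm_num : (0:ℝ) < 1 / 2) A) one_pos
    positivity
  · rintro u ⟨hu₀, huδ⟩ q ⟨hq₁, hq₂⟩
    constructor <;> nlinarith

lemma exists_isDoublingOn_Ici_of_tendsto {A L : ℝ} {B : ℕ} (hL : 0 < L)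
    (h : Tendsto (fun r => f r / (r ^ A * log r ^ B)) atTop (𝓝 L)) :
    ∃ R > 0, ∃ c > 0, IsDoublingOn f c (Ici R) := by
  have hw : ∀ᶠ r in atTop, 0 < r ^ A * log r ^ B := by
    filter_upwards [eventually_gt_atTop 1] with r hr
    exact mul_pos (rpow_pos_of_pos (by linarith) A) (pow_pos (log_pos hr) B)
  obtain ⟨R, hbounds⟩ := eventually_atTop.mp (eventually_bounds_of_tendsto_div hL hw h)
  have hmin : 0 < min ((1 / 2 : ℝ) ^ A) 1 :=
    lt_min (rpow_pos_of_pos (by norm_num) A) one_pos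
  have hweight : IsDoublingOn (fun r => r ^ A * log r ^ B)
      (min ((1 / 2 : ℝ) ^ A) 1 * (1 / 2) ^ B) (Ici 4) :=
    ((isDoublingOn_rpow A).mono fun r (hr : 4 ≤ r) => (by linarith : (0:ℝ) < r)).mul
      (isDoublingOn_log_pow B) hmin.le (by positivity)
      (fun r (hr : 4 ≤ r) => (rpow_pos_of_pos (by linarith) A).le)
      (fun r (hr : 4 ≤ r) => pow_nonneg (log_nonneg (by linarith)) B)
  refine ⟨max (2 * R) 4, by positivity, _, by positivity,
    (hweight.mono (Ici_subset_Ici.mpr (le_max_right _ _))).of_bounds (T := Ici R)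
      (half_pos hL).le (by positivity) (by positivity) ?_ hbounds⟩
  rintro u (hu : max (2 * R) 4 ≤ u) q ⟨hq₁, -⟩
  have h2R := le_max_left (2 * R) 4
  have h4 := le_max_right (2 * R) 4
  show R ≤ q * u
  nlinarith

lemma exists_isDoublingOn_Icc (hf : ContinuousOn f (Ioi 0)) (hpos : ∀ r > 0, 0 < f r)
    {a b : ℝ} (ha : 0 < a) : ∃ c > 0, IsDoublingOn f c (Icc a b) := by
  have hdil : ∀ u ∈ Icc a b, ∀ q ∈ Icc (1 / 2 : ℝ) 1, q * u ∈ Icc (a / 2) b := by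
    rintro u ⟨hau, hub⟩ q ⟨hq₁, hq₂⟩
    constructor <;> nlinarith
  rcases (Icc (a / 2) b).eq_empty_or_nonempty with hempty | hne
  · refine ⟨1, one_pos, fun u hu q hq => ?_⟩
    simpa [hempty] using hdil u hu q hq
  have hpos' : ∀ r ∈ Icc (a / 2) b, 0 < f r := fun r hr => hpos r ((half_pos ha).trans_le hr.1)
  have hK : ContinuousOn f (Icc (a / 2) b) :=
    hf.mono fun r hr => (half_pos ha).trans_le hr.1
  obtain ⟨x, hx, hmin⟩ := isCompact_Icc.exists_isMinOn hne hK
  obtain ⟨y, hy, hmax⟩ := isCompact_Icc.exists_isMaxOn hne hK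
  have hc : 0 < f x / f y := div_pos (hpos' x hx) (hpos' y hy)
  refine ⟨f x / f y, hc, fun u hu q hq => ?_⟩
  have hu' : u ∈ Icc (a / 2) b := by simpa using hdil u hu 1 ⟨by norm_num, le_rfl⟩
  calc f x / f y * f u ≤ f x / f y * f y := mul_le_mul_of_nonneg_left (hmax hu') hc.le
    _ = f x := div_mul_cancel₀ _ (hpos' y hy).ne'
    _ ≤ f (q * u) := hmin (hdil u hu q hq)

theorem exists_isDoublingOn_Ioi {A₀ A₁ L₀ L₁ : ℝ} {B : ℕ} (hf : ContinuousOn f (Ioi 0))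
    (hpos : ∀ r > 0, 0 < f r) (hL₀ : 0 < L₀) (hL₁ : 0 < L₁)
    (h₀ : Tendsto (fun r => r ^ (-A₀) * f r) (𝓝[>] 0) (𝓝 L₀))
    (h₁ : Tendsto (fun r => f r / (r ^ A₁ * log r ^ B)) atTop (𝓝 L₁)) :
    ∃ c > 0, IsDoublingOn f c (Ioi 0) := by
  obtain ⟨δ, hδ, c₀, hc₀, hd₀⟩ := exists_isDoublingOn_Ioo_of_tendsto hL₀ h₀
  obtain ⟨R, hR, c₁, hc₁, hd₁⟩ := exists_isDoublingOn_Ici_of_tendsto hL₁ h₁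
  obtain ⟨c₂, hc₂, hd₂⟩ := exists_isDoublingOn_Icc hf hpos hδ (b := R)
  have hsub : Ioo 0 δ ∪ Icc δ R ∪ Ici R ⊆ Ioi 0 := by
    rintro u ((hu | hu) | hu)
    exacts [hu.1, hδ.trans_le hu.1, hR.trans_le hu]
  have hcover : Ioi 0 ⊆ Ioo 0 δ ∪ Icc δ R ∪ Ici R := by
    intro u (hu : 0 < u)
    by_cases huδ : u < δ
    · exact .inl (.inl ⟨hu, huδ⟩)
    by_cases huR : u ≤ R
    · exact .inl (.inr ⟨not_lt.mp huδ, huR⟩)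
    · exact .inr (not_le.mp huR).le
  have hnonneg : ∀ u ∈ Ioo 0 δ ∪ Icc δ R ∪ Ici R, 0 ≤ f u := fun u hu => (hpos u (hsub hu)).le
  exact ⟨_, lt_min (lt_min hc₀ hc₂) hc₁,
    ((hd₀.union_min hd₂ fun u hu => hnonneg u (.inl hu)).union_min hd₁ hnonneg).mono hcover⟩

end Asymptotics

section Lorentz

variable {N : ℕ} {φ : EuclideanSpace ℝ (Fin N) → ℝ}

lemma rearr_set_nonempty {E : Set (EuclideanSpace ℝ (Fin N))} {s M : ℝ}
    (hE : volume E ≤ ENNReal.ofReal s) (hφ : ∀ x ∉ E, |φ x| ≤ M) :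
    {lam : ℝ | 0 < lam ∧ volume {x | lam < |φ x|} ≤ ENNReal.ofReal s}.Nonempty := by
  refine ⟨|M| + 1, by positivity, (measure_mono fun x (hx : |M| + 1 < |φ x|) => ?_).trans hE⟩
  by_contra hxE
  linarith [hφ x hxE, le_abs_self M]

lemma le_rearr {E F : Set (EuclideanSpace ℝ (Fin N))} {s M M' : ℝ}
    (hE : volume E ≤ ENNReal.ofReal s) (hφE : ∀ x ∉ E, |φ x| ≤ M')
    (hF : ENNReal.ofReal s < volume F) (hφF : ∀ x ∈ F, M ≤ |φ x|) : M ≤ rearr N φ s := by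
  refine le_csInf (rearr_set_nonempty hE hφE) fun lam ⟨_, hlam⟩ => ?_
  by_contra! hlamM
  exact (hF.trans_le (measure_mono fun x hx => hlamM.trans_le (hφF x hx))).not_ge hlam

lemma toReal_inv_le_one {p : ℝ≥0∞} (hp : 1 ≤ p) : p.toReal⁻¹ ≤ 1 := by
  rcases eq_or_ne p ∞ with rfl | hp'
  · simp
  · exact inv_le_one_of_one_le₀ (by simpa using ENNReal.toReal_mono hp' hp)

-- `∞.toReal = 0`, so the case split in `lorentzNorm` is redundant.
lemma lorentz_exponent_eq (p : ℝ≥0∞) :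
    (if p = ∞ then (0 : ℝ) else 1 / p.toReal) = p.toReal⁻¹ := by
  split_ifs with hp <;> simp [hp]

lemma lintegral_rpow_sub_one_Ioo {a s₀ : ℝ} (ha : 0 < a) (hs₀ : 0 < s₀) :
    ∫⁻ s in Ioo 0 s₀, ENNReal.ofReal (s ^ (a - 1)) = ENNReal.ofReal (s₀ ^ a / a) := by
  have hint : IntegrableOn (fun s : ℝ => s ^ (a - 1)) (Ioo 0 s₀) := by
    rw [← intervalIntegrable_iff_integrableOn_Ioo_of_le hs₀.le]
    exact intervalIntegral.intervalIntegrable_rpow' (by linarith)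
  have hnn : 0 ≤ᵐ[volume.restrict (Ioo 0 s₀)] fun s : ℝ => s ^ (a - 1) := by
    filter_upwards [ae_restrict_mem measurableSet_Ioo] with s hs
    exact rpow_nonneg hs.1.le _
  rw [← ofReal_integral_eq_lintegral_ofReal hint hnn, ← integral_Ioc_eq_integral_Ioo,
    ← intervalIntegral.integral_of_le hs₀.le, integral_rpow (.inl (by linarith)),
    sub_add_cancel, zero_rpow ha.ne', sub_zero]

variable {s₀ M : ℝ}

lemma ofReal_le_lorentzNorm_top {p : ℝ≥0∞} (hp : 1 ≤ p) (hs₀ : 0 < s₀) (hM : 0 ≤ M)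
    (h : ∀ s ∈ Ioo 0 s₀, M ≤ rearr N φ s) :
    ENNReal.ofReal (s₀ ^ p.toReal⁻¹ * M / 2) ≤ lorentzNorm N p ∞ φ := by
  simp only [lorentzNorm, if_true, lorentz_exponent_eq]
  refine le_trans ?_ (le_biSup _ (half_pos hs₀ : s₀ / 2 ∈ Ioi 0))
  apply ENNReal.ofReal_le_ofReal
  have hhalf : (1 / 2 : ℝ) ≤ (1 / 2) ^ p.toReal⁻¹ := by
    simpa using rpow_le_rpow_of_exponent_ge (by norm_num : (0 : ℝ) < 1 / 2) (by norm_num)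
      (toReal_inv_le_one hp)
  calc s₀ ^ p.toReal⁻¹ * M / 2 = s₀ ^ p.toReal⁻¹ * (1 / 2) * M := by ring
    _ ≤ s₀ ^ p.toReal⁻¹ * (1 / 2) ^ p.toReal⁻¹ * M := by gcongr
    _ = (s₀ / 2) ^ p.toReal⁻¹ * M := by rw [div_eq_mul_one_div s₀, mul_rpow hs₀.le (by norm_num)]
    _ ≤ (s₀ / 2) ^ p.toReal⁻¹ * rearr N φ (s₀ / 2) := by
        gcongr
        exact h _ ⟨half_pos hs₀, half_lt_self hs₀⟩

lemma ofReal_le_lorentzNorm_of_ne_top {p σ : ℝ≥0∞} (hp : 1 ≤ p) (hp' : p ≠ ∞) (hσ : 1 ≤ σ)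
    (hσ' : σ ≠ ∞) (hs₀ : 0 < s₀) (hM : 0 ≤ M) (h : ∀ s ∈ Ioo 0 s₀, M ≤ rearr N φ s) :
    ENNReal.ofReal (s₀ ^ p.toReal⁻¹ * M / 2) ≤ lorentzNorm N p σ φ := by
  simp only [lorentzNorm, if_neg hσ', lorentz_exponent_eq]
  set e := p.toReal⁻¹
  set r := σ.toReal
  have he : 0 < e := inv_pos.mpr (ENNReal.toReal_pos (by positivity) hp')
  have hr : 1 ≤ r := by simpa using ENNReal.toReal_mono hσ' hσ
  have her : e * r ≤ 2 ^ r :=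
    calc e * r ≤ r := mul_le_of_le_one_left (by linarith) (toReal_inv_le_one hp)
      _ ≤ 1 + r * 1 := by linarith
      _ ≤ (1 + 1) ^ r := one_add_mul_self_le_rpow_one_add (by norm_num) hr
      _ = 2 ^ r := by norm_num
  have hpoint : ∀ s ∈ Ioo 0 s₀, ENNReal.ofReal (s ^ (e * r - 1)) * ENNReal.ofReal (M ^ r) ≤
      ENNReal.ofReal ((s ^ e * rearr N φ s) ^ r / s) := by
    rintro s ⟨hs, hss₀⟩
    rw [← ENNReal.ofReal_mul (by positivity), rpow_sub hs, rpow_one, rpow_mul hs.le,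
      div_mul_eq_mul_div, ← mul_rpow (by positivity) hM]
    apply ENNReal.ofReal_le_ofReal
    gcongr
    exact h s ⟨hs, hss₀⟩
  rw [one_div, ENNReal.le_rpow_inv_iff (by positivity), ENNReal.ofReal_rpow_of_nonneg
    (by positivity) (by positivity)]
  calc ENNReal.ofReal ((s₀ ^ e * M / 2) ^ r)
      ≤ ENNReal.ofReal (s₀ ^ (e * r) / (e * r)) * ENNReal.ofReal (M ^ r) := by
        rw [← ENNReal.ofReal_mul (by positivity)]
        apply ENNReal.ofReal_le_ofReal
        rw [div_rpow (by positivity) (by norm_num), mul_rpow (by positivity) hM,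
          ← rpow_mul hs₀.le, div_mul_eq_mul_div]
        gcongr
    _ = ∫⁻ s in Ioo 0 s₀, ENNReal.ofReal (s ^ (e * r - 1)) * ENNReal.ofReal (M ^ r) := by
        rw [lintegral_mul_const _ (by fun_prop), lintegral_rpow_sub_one_Ioo (by positivity) hs₀]
    _ ≤ ∫⁻ s in Ioo 0 s₀, ENNReal.ofReal ((s ^ e * rearr N φ s) ^ r / s) :=
        setLIntegral_mono' measurableSet_Ioo hpoint
    _ ≤ ∫⁻ s in Ioi 0, ENNReal.ofReal ((s ^ e * rearr N φ s) ^ r / s) :=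
        lintegral_mono_set Ioo_subset_Ioi_self

lemma ofReal_le_lorentzNorm {p σ : ℝ≥0∞} (hp : 1 ≤ p) (hσ : 1 ≤ σ) (hpσ : p = ∞ → σ = ∞)
    (hs₀ : 0 < s₀) (hM : 0 ≤ M) (h : ∀ s ∈ Ioo 0 s₀, M ≤ rearr N φ s) :
    ENNReal.ofReal (s₀ ^ p.toReal⁻¹ * M / 2) ≤ lorentzNorm N p σ φ := by
  rcases eq_or_ne σ ∞ with rfl | hσ'
  · exact ofReal_le_lorentzNorm_top hp hs₀ hM h
  · exact ofReal_le_lorentzNorm_of_ne_top hp (mt hpσ hσ') hσ hσ' hs₀ hM h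

end Lorentz

section Radial

variable {N : ℕ} {f : ℝ → ℝ} {r : ℝ}

lemma volume_ball_eq (hN : 0 < N) (hr : 0 ≤ r) :
    volume (ball (0 : EuclideanSpace ℝ (Fin N)) r)
      = ENNReal.ofReal (r ^ N * volume.real (ball (0 : EuclideanSpace ℝ (Fin N)) 1)) := by
  have : NeZero N := ⟨hN.ne'⟩
  rw [Measure.addHaar_ball volume _ hr, finrank_euclideanSpace_fin,
    ENNReal.ofReal_mul (by positivity), measureReal_def,
    ENNReal.ofReal_toReal measure_ball_lt_top.ne]

lemma volume_ball_diff_ball_half (hN : 0 < N) (hr : 0 ≤ r) :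
    volume (ball (0 : EuclideanSpace ℝ (Fin N)) r \ ball 0 (r / 2)) = ENNReal.ofReal
      ((1 - 2⁻¹ ^ N) * volume.real (ball (0 : EuclideanSpace ℝ (Fin N)) 1) * r ^ N) := by
  rw [measure_sdiff (ball_subset_ball (by linarith)) measurableSet_ball.nullMeasurableSet
    measure_ball_lt_top.ne, volume_ball_eq hN hr, volume_ball_eq hN (by linarith),
    ← ENNReal.ofReal_sub _ (by positivity)]
  congr 1
  ring

lemma le_rearr_indicator_ball (hN : 0 < N) (hf : ContinuousOn f (Ioi 0)) {c : ℝ}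
    (hd : IsDoublingOn f c (Ioi 0)) (hr : 0 < r) {s : ℝ} (hs : 0 < s)
    (hsr : s < (1 - 2⁻¹ ^ N) * volume.real (ball (0 : EuclideanSpace ℝ (Fin N)) 1) * r ^ N) :
    c * f r ≤ rearr N ((ball 0 r).indicator fun x => f ‖x‖) s := by
  set b := volume.real (ball (0 : EuclideanSpace ℝ (Fin N)) 1)
  -- `rearr` is an `sInf`, junk `0` unless some level set has measure `≤ s`: the function is
  -- bounded off a small ball `ball 0 ε`.
  obtain ⟨ε, hε, hεs, hεr⟩ : ∃ ε, 0 < ε ∧ ε ^ N * b < s ∧ ε < r :=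
    (((Continuous.tendsto (by fun_prop) 0).eventually
      (gt_mem_nhds (by simpa [zero_pow hN.ne'] using hs))).and (gt_mem_nhds hr)).exists_gt
  obtain ⟨M, hM⟩ := isCompact_Icc.exists_bound_of_continuousOn
    (hf.mono fun y (hy : y ∈ Icc ε r) => hε.trans_le hy.1)
  refine le_rearr (E := ball 0 ε) (F := ball 0 r \ ball 0 (r / 2)) (M' := M) ?_ ?_ ?_ ?_
  · rw [volume_ball_eq hN hε.le]
    exact ENNReal.ofReal_le_ofReal hεs.le
  · intro x hx
    rw [mem_ball_zero_iff, not_lt] at hx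
    by_cases hxr : x ∈ ball (0 : EuclideanSpace ℝ (Fin N)) r
    · rw [indicator_of_mem hxr, ← Real.norm_eq_abs]
      exact hM _ ⟨hx, (mem_ball_zero_iff.mp hxr).le⟩
    · rw [indicator_of_notMem hxr, abs_zero]
      exact (norm_nonneg _).trans (hM ε ⟨le_rfl, hεr.le⟩)
  · rw [volume_ball_diff_ball_half hN hr.le]
    exact (ENNReal.ofReal_lt_ofReal_iff (hs.trans hsr)).mpr hsr
  · rintro x ⟨hxr, hxr₂⟩
    rw [mem_ball_zero_iff] at hxr
    rw [mem_ball_zero_iff, not_lt] at hxr₂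
    rw [indicator_of_mem (mem_ball_zero_iff.mpr hxr)]
    have hq : c * f r ≤ f (‖x‖ / r * r) := hd r hr (‖x‖ / r)
      ⟨by rw [le_div_iff₀ hr]; linarith, by rw [div_le_one hr]; exact hxr.le⟩
    rw [div_mul_cancel₀ _ hr.ne'] at hq
    exact hq.trans (le_abs_self _)

end Radial

lemma min_le_rpow {x e : ℝ} (hx : 0 < x) (he₀ : 0 ≤ e) (he₁ : e ≤ 1) : min x 1 ≤ x ^ e := by
  rcases le_total 1 x with h | h
  · exact (min_le_right x 1).trans (one_le_rpow h he₀)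
  · exact (min_le_left x 1).trans (by simpa using rpow_le_rpow_of_exponent_ge hx h he₁)

lemma rpow_lorentz_exponent_eq_sqrt_pow {t : ℝ} (ht : 0 ≤ t) (N : ℕ) (p : ℝ≥0∞) :
    t ^ (if p = ∞ then (0 : ℝ) else (N : ℝ) / (2 * p.toReal)) = (√t ^ N) ^ p.toReal⁻¹ := by
  rw [sqrt_eq_rpow, ← rpow_natCast, ← rpow_mul ht, ← rpow_mul ht]
  split_ifs with hp
  · simp [hp]
  · congr 1
    ring

theorem stmt_11_general
    (N : ℕ) (hN : 2 ≤ N) (m : ℕ)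
    (lam1 : ℝ)
    (A20 : ℝ) (B0 : ℕ)
    (h0 : ℝ → ℝ) (c0 : ℝ) (hc0 : 0 < c0)
    (hpos : ∀ r : ℝ, 0 < r → 0 < h0 r)
    (hsmooth : ContDiffOn ℝ (m + 2) h0 (Set.Ioi 0))
    (hzero : Filter.Tendsto (fun r : ℝ => r ^ (-(Aplus N lam1)) * h0 r)
      (nhdsWithin 0 (Set.Ioi 0)) (nhds 1))
    (hinfty : Filter.Tendsto (fun r : ℝ => h0 r / (r ^ A20 * Real.log r ^ B0))
      Filter.atTop (nhds c0)) :
    ∃ C : ℝ, 0 < C ∧ ∀ p σ : ℝ≥0∞, 1 ≤ p → 1 ≤ σ →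
      (p = 1 → σ = 1) → (p = ∞ → σ = ∞) →
      lorentzNormOn N p σ (Metric.ball 0 1) (fun x => h0 ‖x‖) < ∞ →
      ∀ t : ℝ, 0 < t →
        ENNReal.ofReal
            (C * t ^ (if p = ∞ then (0 : ℝ) else (N : ℝ) / (2 * p.toReal))
              * h0 (Real.sqrt t))
          ≤ lorentzNormOn N p σ (Metric.ball 0 (Real.sqrt t)) (fun x => h0 ‖x‖) := by
  have hN₀ : 0 < N := by omega
  obtain ⟨c, hc, hd⟩ := exists_isDoublingOn_Ioi hsmooth.continuousOn hpos one_pos hc0 hzero hinfty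
  set κ := (1 - 2⁻¹ ^ N) * volume.real (ball (0 : EuclideanSpace ℝ (Fin N)) 1)
  have hκ : 0 < κ := mul_pos (sub_pos.mpr (pow_lt_one₀ (by norm_num) (by norm_num) hN₀.ne'))
    (ENNReal.toReal_pos (measure_ball_pos _ _ one_pos).ne' measure_ball_lt_top.ne)
  refine ⟨c * min κ 1 / 2, by positivity, fun p σ hp hσ _ hpσ _ t ht => ?_⟩
  have hrt : 0 < √t := sqrt_pos.mpr ht
  have hmin : min κ 1 ≤ κ ^ p.toReal⁻¹ := min_le_rpow hκ (by positivity) (toReal_inv_le_one hp)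
  have hh : 0 < h0 √t := hpos _ hrt
  calc ENNReal.ofReal (c * min κ 1 / 2 * t ^ (if p = ∞ then (0 : ℝ) else (N : ℝ) / (2 * p.toReal))
        * h0 √t)
      ≤ ENNReal.ofReal ((κ * √t ^ N) ^ p.toReal⁻¹ * (c * h0 √t) / 2) := by
        apply ENNReal.ofReal_le_ofReal
        rw [rpow_lorentz_exponent_eq_sqrt_pow ht.le, mul_rpow hκ.le (by positivity)]
        calc c * min κ 1 / 2 * (√t ^ N) ^ p.toReal⁻¹ * h0 √t
            = min κ 1 * (√t ^ N) ^ p.toReal⁻¹ * (c * h0 √t) / 2 := by ring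
          _ ≤ κ ^ p.toReal⁻¹ * (√t ^ N) ^ p.toReal⁻¹ * (c * h0 √t) / 2 := by gcongr
    _ ≤ lorentzNormOn N p σ (ball 0 √t) fun x => h0 ‖x‖ :=
        ofReal_le_lorentzNorm hp hσ hpσ (by positivity) (by positivity) fun s hs =>
          le_rearr_indicator_ball hN₀ hsmooth.continuousOn hd hrt hs.1 hs.2

/-- under the standing setup (for `k = 0`), there is `C > 0`, independent
of `(p,σ)`, such that whenever `x ↦ h₀(|x|)` has finite `L^{p,σ}` quasinorm on the unit
ball, one has `‖h₀(|·|)‖_{L^{p,σ}(B(0,√t))} ≥ C t^{N/(2p)} h₀(√t)` for all `t > 0`. -/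
theorem stmt_11
    (N : ℕ) (hN : 2 ≤ N) (m : ℕ) (hm : 1 ≤ m)
    (V : ℝ → ℝ) (lam1 lam2 ρ1 ρ2 K : ℝ)
    (hlam1 : -((N : ℝ) - 2) ^ 2 / 4 ≤ lam1) (hlam2 : -((N : ℝ) - 2) ^ 2 / 4 ≤ lam2)
    (hρ1 : 0 < ρ1) (hρ2 : 0 < ρ2) (hK : 0 < K)
    (hVsmooth : ContDiffOn ℝ m V (Set.Ioi 0))
    (hV0 : ∀ r : ℝ, 0 < r → r ≤ 1 → |V r - lam1 * r ^ (-2 : ℝ)| ≤ K * r ^ (-2 + ρ1))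
    (hVinf : ∀ r : ℝ, 1 ≤ r → |V r - lam2 * r ^ (-2 : ℝ)| ≤ K * r ^ (-2 - ρ2))
    (hVderiv : ∀ ℓ : ℕ, 1 ≤ ℓ → ℓ ≤ m → ∃ M : ℝ, ∀ r : ℝ, 0 < r →
      |r ^ (ℓ + 2) * iteratedDeriv ℓ V r| ≤ M)
    (A20 : ℝ) (B0 : ℕ)
    (hA20 : (A20 = Aplus N lam2 ∧
              ((lam2 = -((N : ℝ) - 2) ^ 2 / 4 ∧ B0 = 1) ∨
               (-((N : ℝ) - 2) ^ 2 / 4 < lam2 ∧ B0 = 0))) ∨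
            (A20 = Aminus N lam2 ∧ B0 = 0 ∧ -(N : ℝ) / 2 < A20))
    (h0 : ℝ → ℝ) (c0 : ℝ) (hc0 : 0 < c0)
    (hpos : ∀ r : ℝ, 0 < r → 0 < h0 r)
    (hsmooth : ContDiffOn ℝ (m + 2) h0 (Set.Ioi 0))
    (hODE : ∀ r : ℝ, 0 < r →
      deriv (deriv h0) r + ((N : ℝ) - 1) / r * deriv h0 r - V r * h0 r = 0)
    (hzero : Filter.Tendsto (fun r : ℝ => r ^ (-(Aplus N lam1)) * h0 r)
      (nhdsWithin 0 (Set.Ioi 0)) (nhds 1))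
    (hinfty : Filter.Tendsto (fun r : ℝ => h0 r / (r ^ A20 * Real.log r ^ B0))
      Filter.atTop (nhds c0)) :
    ∃ C : ℝ, 0 < C ∧ ∀ p σ : ℝ≥0∞, 1 ≤ p → 1 ≤ σ →
      (p = 1 → σ = 1) → (p = ∞ → σ = ∞) →
      lorentzNormOn N p σ (Metric.ball 0 1) (fun x => h0 ‖x‖) < ∞ →
      ∀ t : ℝ, 0 < t →
        ENNReal.ofReal
            (C * t ^ (if p = ∞ then (0 : ℝ) else (N : ℝ) / (2 * p.toReal))
              * h0 (Real.sqrt t))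
          ≤ lorentzNormOn N p σ (Metric.ball 0 (Real.sqrt t)) (fun x => h0 ‖x‖) :=
  stmt_11_general N hN m lam1 A20 B0 h0 c0 hc0 hpos hsmooth hzero hinfty
end

section
/- Let N ≥ 2 be an integer, W : (0,∞) → ℝ continuous, and h : (0,∞) → (0,∞) a twice continuously differentiable function with h''(r) + ((N−1)/r)·h'(r) − W(r)·h(r) = 0 for all r > 0, and suppose there exist A > −N/2 and c ≥ 1 with c^{−1} r^A ≤ h(r) ≤ c r^A for 0 < r ≤ 1. Then for every continuous function f : (0,∞) → ℝ that is bounded on (0,1], the quantity u(r) := ∫₀^r s^{1−N} h(s)^{−2} (∫₀^s τ^{N−1} h(τ)² f(τ) dτ) ds is well defined (all integrals converge absolutely) for every r > 0, u is twice continuously differentiable on (0,∞), u''(r) + ((N−1)/r)·u'(r) + 2(h'(r)/h(r))·u'(r) = f(r) for all r > 0 (equivalently, (r^{N−1} h(r)² u'(r))' = r^{N−1} h(r)² f(r)), and lim_{r→0+} u(r) = 0 and lim_{r→0+} u'(r) = 0. -/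
/-!
With `ρ(r) = r^(N-1) h(r)^2` the equation reads `(ρ u')' = ρ f`, and `u' = ρ⁻¹ ∫₀^r ρ f`.
Since `ρ ≍ r^p` near `0` with `p = N - 1 + 2A > -1`, `ρ f = O(r^p)` is integrable at `0`,
`∫₀^r ρ f = O(r^(p+1))`, hence `u' = O(r)` and `u = O(r^2)`. Differentiating the product
`ρ⁻¹ · ∫₀^r ρ f` gives `u'' = f - (ρ'/ρ) u'`, and `ρ'/ρ = (N-1)/r + 2h'/h`.
-/

open MeasureTheory Set Filter Topology

section PowerBounds

variable {g : ℝ → ℝ} {C p : ℝ}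

theorem integrableOn_Ioc_zero_of_abs_le_rpow (hg : ContinuousOn g (Ioi 0)) (hp : -1 < p)
    (hbd : ∀ s ∈ Ioc (0 : ℝ) 1, |g s| ≤ C * s ^ p) (r : ℝ) : IntegrableOn g (Ioc 0 r) := by
  have h01 : IntegrableOn g (Ioc 0 1) :=
    ((intervalIntegral.intervalIntegrable_rpow' hp).const_mul C).1.mono'
      ((hg.mono Ioc_subset_Ioi_self).aestronglyMeasurable measurableSet_Ioc)
      (by filter_upwards [ae_restrict_mem measurableSet_Ioc] with s hs using hbd s hs)
  have h1r : IntegrableOn g (Icc 1 r) :=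
    (hg.mono fun s hs => zero_lt_one.trans_le hs.1).integrableOn_Icc
  refine (h01.union h1r).mono_set fun s hs => ?_
  rcases le_or_gt s 1 with hs1 | hs1
  · exact Or.inl ⟨hs.1, hs1⟩
  · exact Or.inr ⟨hs1.le, hs.2⟩

theorem abs_integral_Ioc_zero_le_rpow (hp : -1 < p)
    (hbd : ∀ s ∈ Ioc (0 : ℝ) 1, |g s| ≤ C * s ^ p) {s : ℝ} (hs : s ∈ Ioc (0 : ℝ) 1) :
    |∫ t in Ioc 0 s, g t| ≤ C / (p + 1) * s ^ (p + 1) :=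
  calc |∫ t in Ioc 0 s, g t| ≤ ∫ t in Ioc 0 s, C * t ^ p :=
        norm_integral_le_of_norm_le (f := g)
          ((intervalIntegral.intervalIntegrable_rpow' hp).const_mul C).1
          (by filter_upwards [ae_restrict_mem measurableSet_Ioc] with t ht
              using hbd t ⟨ht.1, ht.2.trans hs.2⟩)
    _ = C / (p + 1) * s ^ (p + 1) := by
        rw [← intervalIntegral.integral_of_le hs.1.le, intervalIntegral.integral_const_mul,
          integral_rpow (Or.inl hp), Real.zero_rpow (by linarith)]
        ring

theorem hasDerivAt_integral_Ioc_zero (hg : ContinuousOn g (Ioi 0)) {r : ℝ} (hr : 0 < r)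
    (hint : IntegrableOn g (Ioc 0 r)) :
    HasDerivAt (fun s => ∫ t in Ioc 0 s, g t) (g r) r := by
  refine (intervalIntegral.integral_hasDerivAt_right
    ((intervalIntegrable_iff_integrableOn_Ioc_of_le hr.le).2 hint)
    (hg.stronglyMeasurableAtFilter isOpen_Ioi r hr)
    (hg.continuousAt (Ioi_mem_nhds hr))).congr_of_eventuallyEq ?_
  filter_upwards [Ioi_mem_nhds hr] with s hs
  exact (intervalIntegral.integral_of_le (le_of_lt hs)).symm

theorem tendsto_nhdsGT_zero_of_abs_le_rpow (hp : 0 < p)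
    (hbd : ∀ s ∈ Ioc (0 : ℝ) 1, |g s| ≤ C * s ^ p) : Tendsto g (𝓝[>] 0) (𝓝 0) := by
  have hlim : Tendsto (fun s : ℝ => C * s ^ p) (𝓝[>] 0) (𝓝 0) := by
    have := ((Real.continuous_rpow_const hp.le).tendsto 0).const_mul C
    rw [Real.zero_rpow hp.ne', mul_zero] at this
    exact this.mono_left nhdsWithin_le_nhds
  refine squeeze_zero_norm' ?_ hlim
  filter_upwards [Ioc_mem_nhdsGT zero_lt_one] with s hs using hbd s hs

end PowerBounds

theorem contDiffOn_two_of_hasDerivAt {s : Set ℝ} (hs : IsOpen s) {u u' u'' : ℝ → ℝ}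
    (hu : ∀ x ∈ s, HasDerivAt u (u' x) x) (hu' : ∀ x ∈ s, HasDerivAt u' (u'' x) x)
    (hu'' : ContinuousOn u'' s) : ContDiffOn ℝ 2 u s := by
  have hu'_eq : EqOn (deriv u) u' s := fun x hx => (hu x hx).deriv
  have hu''_eq : EqOn (deriv u') u'' s := fun x hx => (hu' x hx).deriv
  refine (contDiffOn_succ_iff_deriv_of_isOpen (n := 1) hs).2
    ⟨fun x hx => (hu x hx).differentiableAt.differentiableWithinAt, by simp, ?_⟩
  refine ContDiffOn.congr ?_ hu'_eq
  refine (contDiffOn_succ_iff_deriv_of_isOpen (n := 0) hs).2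
    ⟨fun x hx => (hu' x hx).differentiableAt.differentiableWithinAt, by simp, ?_⟩
  exact contDiffOn_zero.2 (hu''.congr hu''_eq)

theorem hasDerivAt_inv_mul_of_hasDerivAt_mul {ρ I : ℝ → ℝ} {ρ' a r : ℝ} (hρ : HasDerivAt ρ ρ' r)
    (hρr : ρ r ≠ 0) (hI : HasDerivAt I (ρ r * a) r) :
    HasDerivAt (fun s => (ρ s)⁻¹ * I s) (a - ρ' / ρ r * ((ρ r)⁻¹ * I r)) r :=
  ((hρ.inv hρr).mul hI).congr_deriv (by rw [Pi.inv_apply]; field_simp; ring)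

theorem rpow_mul_sq_bounds {a A c s x : ℝ} (hc : 0 < c) (hs : 0 < s)
    (hx : c⁻¹ * s ^ A ≤ x ∧ x ≤ c * s ^ A) :
    (c ^ 2)⁻¹ * s ^ (a + 2 * A) ≤ s ^ a * x ^ 2 ∧ s ^ a * x ^ 2 ≤ c ^ 2 * s ^ (a + 2 * A) := by
  have hsplit : s ^ (a + 2 * A) = s ^ a * (s ^ A) ^ 2 := by
    rw [Real.rpow_add hs, ← Real.rpow_mul_natCast hs.le]
    norm_num [mul_comm]
  have hsA : 0 < s ^ A := Real.rpow_pos_of_pos hs A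
  have hsa : 0 < s ^ a := Real.rpow_pos_of_pos hs a
  have hlow := pow_le_pow_left₀ (by positivity) hx.1 2
  have hup := pow_le_pow_left₀ ((by positivity : 0 ≤ c⁻¹ * s ^ A).trans hx.1) hx.2 2
  rw [mul_pow, inv_pow] at hlow
  rw [mul_pow] at hup
  rw [hsplit]
  constructor <;> nlinarith [mul_le_mul_of_nonneg_left hlow hsa.le,
    mul_le_mul_of_nonneg_left hup hsa.le]

structure IsPowerLikeWeight (ρ : ℝ → ℝ) (p : ℝ) : Prop where
  pos : ∀ s, 0 < s → 0 < ρ s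
  contDiffOn : ContDiffOn ℝ 1 ρ (Ioi 0)
  neg_one_lt : -1 < p
  comparable : ∃ m M, 0 < m ∧ ∀ s ∈ Ioc (0 : ℝ) 1, m * s ^ p ≤ ρ s ∧ ρ s ≤ M * s ^ p

/-- The derivative of the solution of `(ρ u')' = ρ f` that vanishes at `0`. -/
noncomputable def weightedFlux (ρ f : ℝ → ℝ) (s : ℝ) : ℝ :=
  (ρ s)⁻¹ * ∫ τ in Ioc 0 s, ρ τ * f τ

noncomputable def weightedPrimitive (ρ f : ℝ → ℝ) (r : ℝ) : ℝ :=
  ∫ s in Ioc 0 r, weightedFlux ρ f s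

namespace IsPowerLikeWeight

variable {ρ f : ℝ → ℝ} {p : ℝ}

theorem hasDerivAt (hρ : IsPowerLikeWeight ρ p) {r : ℝ} (hr : 0 < r) :
    HasDerivAt ρ (deriv ρ r) r :=
  ((hρ.contDiffOn.contDiffAt (Ioi_mem_nhds hr)).differentiableAt one_ne_zero).hasDerivAt

theorem abs_mul_le (hρ : IsPowerLikeWeight ρ p) (hfB : ∃ B, ∀ s ∈ Ioc (0 : ℝ) 1, |f s| ≤ B) :
    ∃ K, ∀ s ∈ Ioc (0 : ℝ) 1, |ρ s * f s| ≤ K * s ^ p := by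
  obtain ⟨B, hB⟩ := hfB
  obtain ⟨m, M, -, hmM⟩ := hρ.comparable
  refine ⟨M * B, fun s hs => ?_⟩
  have hρs := hρ.pos s hs.1
  rw [abs_mul, abs_of_pos hρs]
  calc ρ s * |f s| ≤ (M * s ^ p) * B :=
        mul_le_mul (hmM s hs).2 (hB s hs) (abs_nonneg _) ((hρs.le).trans (hmM s hs).2)
    _ = M * B * s ^ p := by ring

theorem integrableOn_mul (hρ : IsPowerLikeWeight ρ p) (hf : ContinuousOn f (Ioi 0))
    (hfB : ∃ B, ∀ s ∈ Ioc (0 : ℝ) 1, |f s| ≤ B) (r : ℝ) :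
    IntegrableOn (fun τ => ρ τ * f τ) (Ioc 0 r) :=
  have ⟨_, hK⟩ := hρ.abs_mul_le hfB
  integrableOn_Ioc_zero_of_abs_le_rpow (hρ.contDiffOn.continuousOn.mul hf) hρ.neg_one_lt hK r

theorem hasDerivAt_weightedFlux (hρ : IsPowerLikeWeight ρ p) (hf : ContinuousOn f (Ioi 0))
    (hfB : ∃ B, ∀ s ∈ Ioc (0 : ℝ) 1, |f s| ≤ B) {r : ℝ} (hr : 0 < r) :
    HasDerivAt (weightedFlux ρ f) (f r - logDeriv ρ r * weightedFlux ρ f r) r :=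
  hasDerivAt_inv_mul_of_hasDerivAt_mul (hρ.hasDerivAt hr) (hρ.pos r hr).ne'
    (hasDerivAt_integral_Ioc_zero (hρ.contDiffOn.continuousOn.mul hf) hr
      (hρ.integrableOn_mul hf hfB r))

theorem continuousOn_weightedFlux (hρ : IsPowerLikeWeight ρ p) (hf : ContinuousOn f (Ioi 0))
    (hfB : ∃ B, ∀ s ∈ Ioc (0 : ℝ) 1, |f s| ≤ B) : ContinuousOn (weightedFlux ρ f) (Ioi 0) :=
  fun _ hr => (hρ.hasDerivAt_weightedFlux hf hfB hr).continuousAt.continuousWithinAt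

theorem abs_weightedFlux_le (hρ : IsPowerLikeWeight ρ p)
    (hfB : ∃ B, ∀ s ∈ Ioc (0 : ℝ) 1, |f s| ≤ B) :
    ∃ K, ∀ s ∈ Ioc (0 : ℝ) 1, |weightedFlux ρ f s| ≤ K * s ^ (1 : ℝ) := by
  obtain ⟨K, hK⟩ := hρ.abs_mul_le hfB
  obtain ⟨m, M, hm, hmM⟩ := hρ.comparable
  have hp1 : 0 < p + 1 := by linarith [hρ.neg_one_lt]
  refine ⟨K / (p + 1) / m, fun s hs => ?_⟩
  have hsp : 0 < s ^ p := Real.rpow_pos_of_pos hs.1 p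
  have hI := abs_integral_Ioc_zero_le_rpow hρ.neg_one_lt hK hs
  have hρ_inv : (ρ s)⁻¹ ≤ (m * s ^ p)⁻¹ := inv_anti₀ (by positivity) (hmM s hs).1
  rw [weightedFlux, abs_mul, abs_of_pos (inv_pos.2 (hρ.pos s hs.1))]
  calc (ρ s)⁻¹ * |∫ τ in Ioc 0 s, ρ τ * f τ| ≤ (m * s ^ p)⁻¹ * (K / (p + 1) * s ^ (p + 1)) :=
        mul_le_mul hρ_inv hI (abs_nonneg _) (by positivity)
    _ = K / (p + 1) / m * s ^ (1 : ℝ) := by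
        rw [Real.rpow_add_one hs.1.ne', Real.rpow_one]
        field_simp

theorem integrableOn_weightedFlux (hρ : IsPowerLikeWeight ρ p) (hf : ContinuousOn f (Ioi 0))
    (hfB : ∃ B, ∀ s ∈ Ioc (0 : ℝ) 1, |f s| ≤ B) (r : ℝ) :
    IntegrableOn (weightedFlux ρ f) (Ioc 0 r) :=
  have ⟨_, hK⟩ := hρ.abs_weightedFlux_le hfB
  integrableOn_Ioc_zero_of_abs_le_rpow (hρ.continuousOn_weightedFlux hf hfB) (by norm_num) hK r

theorem hasDerivAt_weightedPrimitive (hρ : IsPowerLikeWeight ρ p)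
    (hf : ContinuousOn f (Ioi 0)) (hfB : ∃ B, ∀ s ∈ Ioc (0 : ℝ) 1, |f s| ≤ B) {r : ℝ}
    (hr : 0 < r) : HasDerivAt (weightedPrimitive ρ f) (weightedFlux ρ f r) r :=
  hasDerivAt_integral_Ioc_zero (hρ.continuousOn_weightedFlux hf hfB) hr
    (hρ.integrableOn_weightedFlux hf hfB r)

theorem contDiffOn_weightedPrimitive (hρ : IsPowerLikeWeight ρ p)
    (hf : ContinuousOn f (Ioi 0)) (hfB : ∃ B, ∀ s ∈ Ioc (0 : ℝ) 1, |f s| ≤ B) :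
    ContDiffOn ℝ 2 (weightedPrimitive ρ f) (Ioi 0) := by
  have hlogDeriv : ContinuousOn (logDeriv ρ) (Ioi 0) :=
    (hρ.contDiffOn.continuousOn_deriv_of_isOpen isOpen_Ioi le_rfl).div
      hρ.contDiffOn.continuousOn fun s hs => (hρ.pos s hs).ne'
  exact contDiffOn_two_of_hasDerivAt isOpen_Ioi
    (fun _ hr => hρ.hasDerivAt_weightedPrimitive hf hfB hr)
    (fun _ hr => hρ.hasDerivAt_weightedFlux hf hfB hr)
    (hf.sub (hlogDeriv.mul (hρ.continuousOn_weightedFlux hf hfB)))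

theorem deriv_deriv_weightedPrimitive_add (hρ : IsPowerLikeWeight ρ p)
    (hf : ContinuousOn f (Ioi 0)) (hfB : ∃ B, ∀ s ∈ Ioc (0 : ℝ) 1, |f s| ≤ B) {r : ℝ}
    (hr : 0 < r) :
    deriv (deriv (weightedPrimitive ρ f)) r + logDeriv ρ r * deriv (weightedPrimitive ρ f) r
      = f r := by
  have hderiv : deriv (weightedPrimitive ρ f) =ᶠ[𝓝 r] weightedFlux ρ f := by
    filter_upwards [Ioi_mem_nhds hr] with s hs
    exact (hρ.hasDerivAt_weightedPrimitive hf hfB hs).deriv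
  rw [hderiv.deriv_eq, hderiv.eq_of_nhds, (hρ.hasDerivAt_weightedFlux hf hfB hr).deriv]
  ring

theorem tendsto_weightedPrimitive (hρ : IsPowerLikeWeight ρ p)
    (hfB : ∃ B, ∀ s ∈ Ioc (0 : ℝ) 1, |f s| ≤ B) :
    Tendsto (weightedPrimitive ρ f) (𝓝[>] 0) (𝓝 0) :=
  have ⟨_, hK⟩ := hρ.abs_weightedFlux_le hfB
  tendsto_nhdsGT_zero_of_abs_le_rpow (by norm_num)
    fun _ hs => abs_integral_Ioc_zero_le_rpow (by norm_num) hK hs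

theorem tendsto_deriv_weightedPrimitive (hρ : IsPowerLikeWeight ρ p)
    (hf : ContinuousOn f (Ioi 0)) (hfB : ∃ B, ∀ s ∈ Ioc (0 : ℝ) 1, |f s| ≤ B) :
    Tendsto (deriv (weightedPrimitive ρ f)) (𝓝[>] 0) (𝓝 0) := by
  have ⟨_, hK⟩ := hρ.abs_weightedFlux_le hfB
  refine (tendsto_nhdsGT_zero_of_abs_le_rpow one_pos hK).congr' ?_
  filter_upwards [self_mem_nhdsWithin] with s hs
  exact (hρ.hasDerivAt_weightedPrimitive hf hfB hs).deriv.symm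

end IsPowerLikeWeight

theorem logDeriv_rpow_mul_sq {h : ℝ → ℝ} {a r : ℝ} (hr : 0 < r) (hh : h r ≠ 0)
    (hd : DifferentiableAt ℝ h r) :
    logDeriv (fun s => s ^ a * h s ^ 2) r = a / r + 2 * (deriv h r / h r) := by
  have hderiv : HasDerivAt (fun s => s ^ a * h s ^ 2)
      (a * r ^ (a - 1) * h r ^ 2 + r ^ a * (2 * h r ^ 1 * deriv h r)) r :=
    (Real.hasDerivAt_rpow_const (Or.inl hr.ne')).mul (hd.hasDerivAt.pow 2)
  rw [logDeriv_apply, hderiv.deriv, Real.rpow_sub_one hr.ne']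
  field_simp

theorem isPowerLikeWeight_rpow_mul_sq {h : ℝ → ℝ} {a A c : ℝ} (hpos : ∀ s, 0 < s → 0 < h s)
    (hh : ContDiffOn ℝ 1 h (Ioi 0)) (hc : 0 < c)
    (hcomp : ∀ s, 0 < s → s ≤ 1 → c⁻¹ * s ^ A ≤ h s ∧ h s ≤ c * s ^ A)
    (hp : -1 < a + 2 * A) : IsPowerLikeWeight (fun s => s ^ a * h s ^ 2) (a + 2 * A) where
  pos s hs := mul_pos (Real.rpow_pos_of_pos hs a) (pow_pos (hpos s hs) 2)
  contDiffOn := ContDiffOn.mul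
    (fun s hs => (Real.contDiffAt_rpow_const_of_ne (ne_of_gt hs)).contDiffWithinAt) (hh.pow 2)
  neg_one_lt := hp
  comparable := ⟨(c ^ 2)⁻¹, c ^ 2, by positivity,
    fun s hs => rpow_mul_sq_bounds hc hs.1 (hcomp s hs.1 hs.2)⟩

theorem stmt_12_general
    (N : ℕ)
    (h : ℝ → ℝ) (hpos : ∀ r : ℝ, 0 < r → 0 < h r)
    (hsmooth : ContDiffOn ℝ 2 h (Set.Ioi 0))
    (A cc : ℝ) (hA : -(N : ℝ) / 2 < A) (hcc : 1 ≤ cc)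
    (hcomp : ∀ r : ℝ, 0 < r → r ≤ 1 → cc⁻¹ * r ^ A ≤ h r ∧ h r ≤ cc * r ^ A)
    (f : ℝ → ℝ) (hf : ContinuousOn f (Set.Ioi 0))
    (hfbdd : ∃ M : ℝ, ∀ r : ℝ, 0 < r → r ≤ 1 → |f r| ≤ M) :
    (∀ r : ℝ, 0 < r →
      IntegrableOn (fun τ : ℝ => τ ^ ((N : ℝ) - 1) * h τ ^ 2 * f τ) (Set.Ioc 0 r) ∧
      IntegrableOn (fun s : ℝ => s ^ (1 - (N : ℝ)) / h s ^ 2 *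
        ∫ τ in Set.Ioc (0 : ℝ) s, τ ^ ((N : ℝ) - 1) * h τ ^ 2 * f τ) (Set.Ioc 0 r)) ∧
    ContDiffOn ℝ 2
      (fun r : ℝ => ∫ s in Set.Ioc (0 : ℝ) r, s ^ (1 - (N : ℝ)) / h s ^ 2 *
        ∫ τ in Set.Ioc (0 : ℝ) s, τ ^ ((N : ℝ) - 1) * h τ ^ 2 * f τ) (Set.Ioi 0) ∧
    (∀ r : ℝ, 0 < r →
      deriv (deriv (fun r : ℝ => ∫ s in Set.Ioc (0 : ℝ) r, s ^ (1 - (N : ℝ)) / h s ^ 2 *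
          ∫ τ in Set.Ioc (0 : ℝ) s, τ ^ ((N : ℝ) - 1) * h τ ^ 2 * f τ)) r
        + ((N : ℝ) - 1) / r *
          deriv (fun r : ℝ => ∫ s in Set.Ioc (0 : ℝ) r, s ^ (1 - (N : ℝ)) / h s ^ 2 *
            ∫ τ in Set.Ioc (0 : ℝ) s, τ ^ ((N : ℝ) - 1) * h τ ^ 2 * f τ) r
        + 2 * (deriv h r / h r) *
          deriv (fun r : ℝ => ∫ s in Set.Ioc (0 : ℝ) r, s ^ (1 - (N : ℝ)) / h s ^ 2 *
            ∫ τ in Set.Ioc (0 : ℝ) s, τ ^ ((N : ℝ) - 1) * h τ ^ 2 * f τ) r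
        = f r) ∧
    Filter.Tendsto
      (fun r : ℝ => ∫ s in Set.Ioc (0 : ℝ) r, s ^ (1 - (N : ℝ)) / h s ^ 2 *
        ∫ τ in Set.Ioc (0 : ℝ) s, τ ^ ((N : ℝ) - 1) * h τ ^ 2 * f τ)
      (nhdsWithin 0 (Set.Ioi 0)) (nhds 0) ∧
    Filter.Tendsto
      (deriv (fun r : ℝ => ∫ s in Set.Ioc (0 : ℝ) r, s ^ (1 - (N : ℝ)) / h s ^ 2 *
        ∫ τ in Set.Ioc (0 : ℝ) s, τ ^ ((N : ℝ) - 1) * h τ ^ 2 * f τ))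
      (nhdsWithin 0 (Set.Ioi 0)) (nhds 0) := by
  set ρ : ℝ → ℝ := fun s => s ^ ((N : ℝ) - 1) * h s ^ 2 with hρ_def
  have hρ : IsPowerLikeWeight ρ ((N : ℝ) - 1 + 2 * A) :=
    isPowerLikeWeight_rpow_mul_sq hpos (hsmooth.of_le one_le_two) (by linarith) hcomp
      (by linarith)
  have hfB : ∃ B, ∀ s ∈ Ioc (0 : ℝ) 1, |f s| ≤ B := hfbdd.imp fun B hB s hs => hB s hs.1 hs.2
  have hflux : EqOn (fun s => s ^ (1 - (N : ℝ)) / h s ^ 2 *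
      ∫ τ in Ioc 0 s, τ ^ ((N : ℝ) - 1) * h τ ^ 2 * f τ) (weightedFlux ρ f) (Ioi 0) :=
    fun s hs => by
      simp only [weightedFlux, hρ_def, div_eq_mul_inv, mul_inv, ← Real.rpow_neg hs.le, neg_sub]
  have hu : (fun r => ∫ s in Ioc 0 r, s ^ (1 - (N : ℝ)) / h s ^ 2 *
      ∫ τ in Ioc 0 s, τ ^ ((N : ℝ) - 1) * h τ ^ 2 * f τ) = weightedPrimitive ρ f :=
    funext fun r => setIntegral_congr_fun measurableSet_Ioc (hflux.mono Ioc_subset_Ioi_self)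
  rw [hu]
  refine ⟨fun r _ => ⟨hρ.integrableOn_mul hf hfB r,
      (hρ.integrableOn_weightedFlux hf hfB r).congr_fun
        (hflux.mono Ioc_subset_Ioi_self).symm measurableSet_Ioc⟩,
    hρ.contDiffOn_weightedPrimitive hf hfB, fun r hr => ?_, hρ.tendsto_weightedPrimitive hfB,
    hρ.tendsto_deriv_weightedPrimitive hf hfB⟩
  rw [← hρ.deriv_deriv_weightedPrimitive_add hf hfB hr, logDeriv_rpow_mul_sq hr (hpos r hr).ne'
    ((hsmooth.contDiffAt (Ioi_mem_nhds hr)).differentiableAt two_ne_zero)]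
  ring

/-- variation-of-parameters for the weighted operator associated with a
positive solution `h` of `h'' + (N-1)/r · h' - W h = 0` comparable to `r^A` near `0`
with `A > -N/2`: for bounded continuous `f`, the function
`u(r) = ∫₀^r s^{1-N} h(s)⁻² (∫₀^s τ^{N-1} h(τ)² f(τ) dτ) ds` is well defined, is `C²`
on `(0,∞)`, satisfies `u'' + (N-1)/r · u' + 2 (h'/h) u' = f`, and `u, u' → 0` at `0⁺`. -/
theorem stmt_12
    (N : ℕ) (hN : 2 ≤ N)
    (W : ℝ → ℝ) (hW : ContinuousOn W (Set.Ioi 0))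
    (h : ℝ → ℝ) (hpos : ∀ r : ℝ, 0 < r → 0 < h r)
    (hsmooth : ContDiffOn ℝ 2 h (Set.Ioi 0))
    (hODE : ∀ r : ℝ, 0 < r →
      deriv (deriv h) r + ((N : ℝ) - 1) / r * deriv h r - W r * h r = 0)
    (A cc : ℝ) (hA : -(N : ℝ) / 2 < A) (hcc : 1 ≤ cc)
    (hcomp : ∀ r : ℝ, 0 < r → r ≤ 1 → cc⁻¹ * r ^ A ≤ h r ∧ h r ≤ cc * r ^ A)
    (f : ℝ → ℝ) (hf : ContinuousOn f (Set.Ioi 0))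
    (hfbdd : ∃ M : ℝ, ∀ r : ℝ, 0 < r → r ≤ 1 → |f r| ≤ M) :
    (∀ r : ℝ, 0 < r →
      IntegrableOn (fun τ : ℝ => τ ^ ((N : ℝ) - 1) * h τ ^ 2 * f τ) (Set.Ioc 0 r) ∧
      IntegrableOn (fun s : ℝ => s ^ (1 - (N : ℝ)) / h s ^ 2 *
        ∫ τ in Set.Ioc (0 : ℝ) s, τ ^ ((N : ℝ) - 1) * h τ ^ 2 * f τ) (Set.Ioc 0 r)) ∧
    ContDiffOn ℝ 2
      (fun r : ℝ => ∫ s in Set.Ioc (0 : ℝ) r, s ^ (1 - (N : ℝ)) / h s ^ 2 *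
        ∫ τ in Set.Ioc (0 : ℝ) s, τ ^ ((N : ℝ) - 1) * h τ ^ 2 * f τ) (Set.Ioi 0) ∧
    (∀ r : ℝ, 0 < r →
      deriv (deriv (fun r : ℝ => ∫ s in Set.Ioc (0 : ℝ) r, s ^ (1 - (N : ℝ)) / h s ^ 2 *
          ∫ τ in Set.Ioc (0 : ℝ) s, τ ^ ((N : ℝ) - 1) * h τ ^ 2 * f τ)) r
        + ((N : ℝ) - 1) / r *
          deriv (fun r : ℝ => ∫ s in Set.Ioc (0 : ℝ) r, s ^ (1 - (N : ℝ)) / h s ^ 2 *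
            ∫ τ in Set.Ioc (0 : ℝ) s, τ ^ ((N : ℝ) - 1) * h τ ^ 2 * f τ) r
        + 2 * (deriv h r / h r) *
          deriv (fun r : ℝ => ∫ s in Set.Ioc (0 : ℝ) r, s ^ (1 - (N : ℝ)) / h s ^ 2 *
            ∫ τ in Set.Ioc (0 : ℝ) s, τ ^ ((N : ℝ) - 1) * h τ ^ 2 * f τ) r
        = f r) ∧
    Filter.Tendsto
      (fun r : ℝ => ∫ s in Set.Ioc (0 : ℝ) r, s ^ (1 - (N : ℝ)) / h s ^ 2 *
        ∫ τ in Set.Ioc (0 : ℝ) s, τ ^ ((N : ℝ) - 1) * h τ ^ 2 * f τ)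
      (nhdsWithin 0 (Set.Ioi 0)) (nhds 0) ∧
    Filter.Tendsto
      (deriv (fun r : ℝ => ∫ s in Set.Ioc (0 : ℝ) r, s ^ (1 - (N : ℝ)) / h s ^ 2 *
        ∫ τ in Set.Ioc (0 : ℝ) s, τ ^ ((N : ℝ) - 1) * h τ ^ 2 * f τ))
      (nhdsWithin 0 (Set.Ioi 0)) (nhds 0) :=
  stmt_12_general N h hpos hsmooth A cc hA hcc hcomp f hf hfbdd
end

section
/- Let N ≥ 1 and ℓ ≥ 1 be integers. There exists a constant C > 0, depending only on N and ℓ, such that for every ℓ-times continuously differentiable function g : (0,∞) → ℝ and every x ∈ ℝ^N with x ≠ 0, the ℓ-th iterated Fréchet derivative of the radial function x ↦ g(|x|) at x satisfies ‖D^ℓ(g∘|·|)(x)‖ ≤ C · Σ_{j=1}^{ℓ} |g^{(j)}(|x|)| · |x|^{j−ℓ}, where g^{(j)} denotes the j-th derivative of g and |x| is the Euclidean norm. -/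
/-!
Rescaling `y ↦ y / |x|` moves the point to the unit sphere at the cost of a factor `|x|^{-ℓ}`,
and replaces `g` by `t ↦ g (|x| t)`, whose `j`-th derivative at `1` is `|x|^j g^{(j)}(|x|)`.
On the unit sphere the derivatives of orders `1, …, ℓ` of the norm are bounded by `D^i` for
some `D` by compactness, so Faà di Bruno's bound `ℓ! B D^ℓ` applies, where `B` bounds the
derivatives of the profile at `1`. Subtracting the constant `g (|x|)` first, which does not
change a derivative of order `ℓ ≥ 1`, keeps the zeroth derivative out of `B`.
-/

open Set Nat

section IteratedFDeriv

variable {𝕜 E F : Type*} [NontriviallyNormedField 𝕜] [NormedAddCommGroup E] [NormedSpace 𝕜 E]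
  [NormedAddCommGroup F] [NormedSpace 𝕜 F]

theorem iteratedFDeriv_const_add {n : ℕ} (hn : n ≠ 0) (c : F) (f : E → F) :
    iteratedFDeriv 𝕜 n (fun y => c + f y) = iteratedFDeriv 𝕜 n f := by
  obtain ⟨m, rfl⟩ := Nat.exists_eq_succ_of_ne_zero hn
  ext1 x
  simp only [iteratedFDeriv_succ_eq_comp_right, fderiv_const_add]

theorem norm_iteratedFDeriv_comp_smul (f : E → F) {c : 𝕜} (hc : c ≠ 0) (n : ℕ) (x : E) :
    ‖iteratedFDeriv 𝕜 n (fun y => f (c • y)) x‖ = ‖c‖ ^ n * ‖iteratedFDeriv 𝕜 n f (c • x)‖ := by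
  let e : E ≃L[𝕜] E := ContinuousLinearEquiv.smulLeft (Units.mk0 c hc)
  have he : ∀ y, e y = c • y := fun _ => rfl
  have hcomp := e.iteratedFDerivWithin_comp_right f uniqueDiffOn_univ (mem_univ (e x)) n
  rw [preimage_univ, iteratedFDerivWithin_univ, iteratedFDerivWithin_univ] at hcomp
  have hsmul : (iteratedFDeriv 𝕜 n f (e x)).compContinuousLinearMap (fun _ => (e : E →L[𝕜] E))
      = c ^ n • iteratedFDeriv 𝕜 n f (c • x) := by
    ext v
    simpa [he] using (iteratedFDeriv 𝕜 n f (c • x)).map_smul_univ (fun _ => c) v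
  change ‖iteratedFDeriv 𝕜 n (f ∘ e) x‖ = _
  rw [hcomp, hsmul, norm_smul, norm_pow]

theorem IsCompact.exists_norm_iteratedFDerivWithin_le_pow {f : E → F} {s K : Set E} {ℓ : ℕ}
    (hf : ContDiffOn 𝕜 ℓ f s) (hs : UniqueDiffOn 𝕜 s) (hK : IsCompact K) (hKs : K ⊆ s) :
    ∃ D : ℝ, 1 ≤ D ∧ ∀ i, 1 ≤ i → i ≤ ℓ → ∀ u ∈ K, ‖iteratedFDerivWithin 𝕜 i f s u‖ ≤ D ^ i := by
  have hcont : ContinuousOn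
      (fun u => ∑ i ∈ Finset.range (ℓ + 1), ‖iteratedFDerivWithin 𝕜 i f s u‖) K :=
    continuousOn_finsetSum _ fun i hi =>
      ((hf.continuousOn_iteratedFDerivWithin (by exact_mod_cast Finset.mem_range_succ_iff.mp hi)
        hs).mono hKs).norm
  obtain ⟨c, hc⟩ := hK.exists_bound_of_continuousOn hcont
  refine ⟨max c 1, le_max_right _ _, fun i hi1 hiℓ u hu => ?_⟩
  calc ‖iteratedFDerivWithin 𝕜 i f s u‖
      ≤ ∑ i ∈ Finset.range (ℓ + 1), ‖iteratedFDerivWithin 𝕜 i f s u‖ :=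
        Finset.single_le_sum (f := fun i => ‖iteratedFDerivWithin 𝕜 i f s u‖)
          (fun _ _ => norm_nonneg _) (Finset.mem_range_succ_iff.mpr hiℓ)
    _ ≤ c := (le_abs_self _).trans (hc u hu)
    _ ≤ max c 1 := le_max_left _ _
    _ ≤ max c 1 ^ i := le_self_pow₀ (le_max_right _ _) (by omega)

end IteratedFDeriv

section Radial

variable {E : Type*} [NormedAddCommGroup E] [InnerProductSpace ℝ E]

theorem contDiffOn_norm_compl_zero (n : WithTop ℕ∞) : ContDiffOn ℝ n (fun y : E => ‖y‖) {0}ᶜ :=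
  fun _ hy => (contDiffAt_norm ℝ (mem_compl_singleton_iff.mp hy)).contDiffWithinAt

theorem norm_iteratedFDeriv_comp_norm_le {G : ℝ → ℝ} {ℓ : ℕ} (hG : ContDiffOn ℝ ℓ G (Ioi 0))
    (hℓ : ℓ ≠ 0) {u : E} (hu : u ≠ 0) {B D : ℝ} (hB : 0 ≤ B)
    (hGB : ∀ i, 1 ≤ i → i ≤ ℓ → |iteratedDerivWithin i G (Ioi 0) ‖u‖| ≤ B)
    (hD : ∀ i, 1 ≤ i → i ≤ ℓ → ‖iteratedFDerivWithin ℝ i (fun y : E => ‖y‖) {0}ᶜ u‖ ≤ D ^ i) :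
    ‖iteratedFDeriv ℝ ℓ (fun y : E => G ‖y‖) u‖ ≤ ℓ ! * B * D ^ ℓ := by
  let G₀ : ℝ → ℝ := fun t => -G ‖u‖ + G t
  have hG₀ : ∀ i, 1 ≤ i → iteratedDerivWithin i G₀ (Ioi 0) = iteratedDerivWithin i G (Ioi 0) :=
    fun i hi => funext fun _ => iteratedDerivWithin_const_add hi _
  have hu' : u ∈ ({0}ᶜ : Set E) := hu
  have hshift : iteratedFDeriv ℝ ℓ (fun y : E => G ‖y‖) u
      = iteratedFDerivWithin ℝ ℓ (G₀ ∘ fun y : E => ‖y‖) {0}ᶜ u := by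
    rw [iteratedFDerivWithin_of_isOpen ℓ isOpen_compl_singleton hu']
    exact congrFun (iteratedFDeriv_const_add hℓ (-G ‖u‖) _).symm u
  rw [hshift]
  have hG₀cd : ContDiffOn ℝ ℓ G₀ (Ioi 0) := contDiffOn_const.add hG
  have hnorm : ContDiffOn ℝ ℓ (fun y : E => ‖y‖) {0}ᶜ := contDiffOn_norm_compl_zero ℓ
  refine norm_iteratedFDerivWithin_comp_le hG₀cd hnorm le_rfl (uniqueDiffOn_Ioi 0)
    isOpen_compl_singleton.uniqueDiffOn
    (fun _ hy => norm_pos_iff.mpr (mem_compl_singleton_iff.mp hy)) hu' (fun i hi => ?_) hD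
  rw [norm_iteratedFDerivWithin_eq_norm_iteratedDerivWithin, Real.norm_eq_abs]
  rcases Nat.eq_zero_or_pos i with rfl | hi0
  · simpa [G₀] using hB
  · rw [hG₀ i hi0]
    exact hGB i hi0 hi

theorem exists_norm_iteratedFDeriv_radial_le [FiniteDimensional ℝ E] {ℓ : ℕ} (hℓ : 1 ≤ ℓ) :
    ∃ C : ℝ, 0 < C ∧ ∀ g : ℝ → ℝ, ContDiffOn ℝ ℓ g (Ioi 0) → ∀ x : E, x ≠ 0 →
      ‖iteratedFDeriv ℝ ℓ (fun y : E => g ‖y‖) x‖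
        ≤ C * ∑ j ∈ Finset.Icc 1 ℓ, |iteratedDeriv j g ‖x‖| * ‖x‖ ^ ((j : ℝ) - ℓ) := by
  obtain ⟨D, hD1, hD⟩ := (isCompact_sphere (0 : E) 1).exists_norm_iteratedFDerivWithin_le_pow
    (contDiffOn_norm_compl_zero ℓ) isOpen_compl_singleton.uniqueDiffOn
    (fun u hu => ne_zero_of_mem_unit_sphere ⟨u, hu⟩)
  refine ⟨ℓ ! * D ^ ℓ, by positivity, fun g hg x hx => ?_⟩
  set r := ‖x‖
  have hr : 0 < r := norm_pos_iff.mpr hx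
  set B := ∑ j ∈ Finset.Icc 1 ℓ, |iteratedDeriv j g r| * r ^ j
  have hunit : ‖r⁻¹ • x‖ = 1 := by
    rw [norm_smul, norm_inv, Real.norm_of_nonneg hr.le, inv_mul_cancel₀ hr.ne']
  have hscaled : ‖iteratedFDeriv ℝ ℓ (fun z : E => g (r * ‖z‖)) (r⁻¹ • x)‖ ≤ ℓ ! * B * D ^ ℓ := by
    refine norm_iteratedFDeriv_comp_norm_le (G := fun t => g (r * t))
      (hg.comp (contDiffOn_const.mul contDiffOn_id) fun t ht => mul_pos hr ht) (by omega)
      (norm_ne_zero_iff.mp (by simp [hunit]))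
      (Finset.sum_nonneg fun j _ => by positivity) (fun i hi1 hiℓ => ?_)
      (fun i hi1 hiℓ => hD i hi1 hiℓ _ (mem_sphere_zero_iff_norm.mpr hunit))
    rw [hunit, iteratedDerivWithin_comp_const_smul (mem_Ioi.mpr one_pos) (uniqueDiffOn_Ioi 0)
      (hg.of_le (by exact_mod_cast hiℓ)) r (fun t ht => mul_pos hr ht), smul_eq_mul, mul_one,
      iteratedDerivWithin_of_isOpen isOpen_Ioi hr, abs_mul, abs_pow, abs_of_pos hr, mul_comm]
    exact Finset.single_le_sum (f := fun j => |iteratedDeriv j g r| * r ^ j)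
      (fun j _ => by positivity) (Finset.mem_Icc.mpr ⟨hi1, hiℓ⟩)
  have hfun : (fun y : E => g ‖y‖) = fun y => g (r * ‖r⁻¹ • y‖) := by
    ext y
    rw [norm_smul, norm_inv, Real.norm_of_nonneg hr.le, mul_inv_cancel_left₀ hr.ne']
  calc ‖iteratedFDeriv ℝ ℓ (fun y : E => g ‖y‖) x‖
      = r⁻¹ ^ ℓ * ‖iteratedFDeriv ℝ ℓ (fun z : E => g (r * ‖z‖)) (r⁻¹ • x)‖ := by
        rw [hfun, norm_iteratedFDeriv_comp_smul (fun z : E => g (r * ‖z‖)) (inv_ne_zero hr.ne'),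
          norm_inv, Real.norm_of_nonneg hr.le]
    _ ≤ r⁻¹ ^ ℓ * (ℓ ! * B * D ^ ℓ) := by gcongr
    _ = ℓ ! * D ^ ℓ * ∑ j ∈ Finset.Icc 1 ℓ, |iteratedDeriv j g r| * r ^ ((j : ℝ) - ℓ) := by
        simp only [B, Finset.mul_sum, Finset.sum_mul, Real.rpow_sub hr, Real.rpow_natCast]
        refine Finset.sum_congr rfl fun j _ => ?_
        rw [div_eq_mul_inv, ← inv_pow]
        ring

end Radial

theorem stmt_14_general (N ℓ : ℕ) (hℓ : 1 ≤ ℓ) :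
    ∃ C : ℝ, 0 < C ∧
      ∀ g : ℝ → ℝ, ContDiffOn ℝ ℓ g (Set.Ioi 0) →
        ∀ x : EuclideanSpace ℝ (Fin N), x ≠ 0 →
          ‖iteratedFDeriv ℝ ℓ (fun y : EuclideanSpace ℝ (Fin N) => g ‖y‖) x‖
            ≤ C * ∑ j ∈ Finset.Icc 1 ℓ, |iteratedDeriv j g ‖x‖| * ‖x‖ ^ ((j : ℝ) - ℓ) :=
  exists_norm_iteratedFDeriv_radial_le hℓ

/-- there is `C > 0`, depending only on `N` and `ℓ`, such that for every
`ℓ`-times continuously differentiable `g : (0,∞) → ℝ` and every `x ≠ 0` in `ℝ^N`, the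
`ℓ`-th Fréchet derivative of the radial function `x ↦ g(|x|)` satisfies
`‖D^ℓ (g ∘ |·|)(x)‖ ≤ C Σ_{j=1}^ℓ |g^{(j)}(|x|)| |x|^{j-ℓ}`. -/
theorem stmt_14 (N ℓ : ℕ) (hN : 1 ≤ N) (hℓ : 1 ≤ ℓ) :
    ∃ C : ℝ, 0 < C ∧
      ∀ g : ℝ → ℝ, ContDiffOn ℝ ℓ g (Set.Ioi 0) →
        ∀ x : EuclideanSpace ℝ (Fin N), x ≠ 0 →
          ‖iteratedFDeriv ℝ ℓ (fun y : EuclideanSpace ℝ (Fin N) => g ‖y‖) x‖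
            ≤ C * ∑ j ∈ Finset.Icc 1 ℓ, |iteratedDeriv j g ‖x‖| * ‖x‖ ^ ((j : ℝ) - ℓ) :=
  stmt_14_general N ℓ hℓ
end

section
/- Let N ≥ 2 and k ≥ 0 be integers, set ω_k := k(N+k−2), let V : [0,∞) → ℝ be continuous, and let h : (0,∞) → ℝ be a twice continuously differentiable function satisfying h''(r) + ((N−1)/r)·h'(r) − (V(r) + ω_k r^{−2})·h(r) = 0 for all r > 0 and lim_{r→0+} r^{−k} h(r) = 1. Then for every r > 0 one has h(r) = r^k · (1 + ∫₀^r s^{−2k−N+1} (∫₀^s τ^{k+N−1} V(τ) h(τ) dτ) ds), all integrals being absolutely convergent. -/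
/-!
Write `g r = r^(-k) h r` and `F r = r^(k+N-1) h' r - k r^(k+N-2) h r`, which is `r^(N-1)` times the
Wronskian of `r^k` and `h`. The equation says exactly that `F' = r^(k+N-1) V h`, and a direct
computation gives `g' = r^(1-2k-N) F`. Hence `F = L + ∫₀^r τ^(k+N-1) V h` for a constant `L`, and
integrating `g'` over `[a, r]` gives
`g r - g a = L ∫ₐ^r s^(1-2k-N) ds + ∫ₐ^r s^(1-2k-N) ∫₀^s τ^(k+N-1) V h`.
As `a → 0⁺` the left side and the last integral converge, while `∫ₐ^r s^(1-2k-N) ds` diverges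
because `1-2k-N ≤ -1`; so `L = 0`, and the limit is the identity. Absolute convergence comes from
`g → 1`: the inner integrand is `O(τ^(2k+N-1))`, so the inner integral is `O(s^(2k+N))` and the
outer integrand is `O(s)`.
-/

open MeasureTheory Set Filter Topology Real intervalIntegral

theorem hasDerivAt_deriv_of_contDiffOn_two {h : ℝ → ℝ} {s : Set ℝ} {x : ℝ} (hs : IsOpen s)
    (hh : ContDiffOn ℝ 2 h s) (hx : x ∈ s) :
    HasDerivAt h (deriv h x) x ∧ HasDerivAt (deriv h) (deriv (deriv h) x) x :=
  ⟨((hh.differentiableOn (by norm_num) x hx).differentiableAt (hs.mem_nhds hx)).hasDerivAt,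
    (((hh.deriv_of_isOpen hs (by norm_num)).differentiableOn one_ne_zero x hx).differentiableAt
      (hs.mem_nhds hx)).hasDerivAt⟩

theorem hasDerivAt_rpow_mul_sub_rpow_mul {h h' : ℝ → ℝ} {h'' n k r : ℝ} (hr : 0 < r)
    (h₁ : HasDerivAt h (h' r) r) (h₂ : HasDerivAt h' h'' r) :
    HasDerivAt (fun x => x ^ (k + n - 1) * h' x - k * (x ^ (k + n - 2) * h x))
      (r ^ (k + n - 1) *
        (h'' + (n - 1) / r * h' r - k * (n + k - 2) * r ^ (-2 : ℝ) * h r)) r := by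
  have hpow (e : ℝ) : HasDerivAt (fun x => x ^ e) (e * r ^ (e - 1)) r :=
    hasDerivAt_rpow_const (Or.inl hr.ne')
  refine (((hpow _).mul h₂).sub (((hpow _).mul h₁).const_mul k)).congr_deriv ?_
  have e₁ : r ^ (k + n - 2) = r ^ (k + n - 1) / r := by
    rw [← rpow_sub_one hr.ne']; ring_nf
  have e₂ : r ^ (k + n - 2 - 1) = r ^ (k + n - 1) / r / r := by
    rw [← rpow_sub_one hr.ne', ← rpow_sub_one hr.ne']; ring_nf
  have e₃ : r ^ (-2 : ℝ) = 1 / r / r := by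
    rw [rpow_neg hr.le, rpow_two]; field_simp
  rw [show k + n - 1 - 1 = k + n - 2 by ring, e₂, e₁, e₃]
  field_simp
  ring

theorem hasDerivAt_rpow_neg_mul {h h' : ℝ → ℝ} {n k r : ℝ} (hr : 0 < r)
    (h₁ : HasDerivAt h (h' r) r) :
    HasDerivAt (fun x => x ^ (-k) * h x)
      (r ^ (1 - 2 * k - n) * (r ^ (k + n - 1) * h' r - k * (r ^ (k + n - 2) * h r))) r := by
  refine ((hasDerivAt_rpow_const (p := -k) (Or.inl hr.ne')).mul h₁).congr_deriv ?_
  have e₁ : r ^ (1 - 2 * k - n) * r ^ (k + n - 1) = r ^ (-k) := by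
    rw [← rpow_add hr]; ring_nf
  have e₂ : r ^ (1 - 2 * k - n) * r ^ (k + n - 2) = r ^ (-k - 1) := by
    rw [← rpow_add hr]; ring_nf
  linear_combination -(h' r) * e₁ + k * h r * e₂

/-- Along `a = exp (-i)`, a bounded `∫ₐ^r x ^ p` would make `x ^ p` integrable on `(0, r]`. -/
theorem not_tendsto_intervalIntegral_rpow_nhdsGT {p r l : ℝ} (hp : p ≤ -1) (hr : 0 < r) :
    ¬ Tendsto (fun a => ∫ x in a..r, x ^ p) (𝓝[>] 0) (𝓝 l) := by
  intro hl
  have hexp : Tendsto (fun i : ℝ => exp (-i)) atTop (𝓝[>] 0) :=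
    tendsto_nhdsWithin_iff.2 ⟨tendsto_exp_neg_atTop_nhds_zero, .of_forall fun _ => exp_pos _⟩
  have hint : IntegrableOn (fun x => x ^ p) (Ioc 0 r) := by
    refine integrableOn_Ioc_of_intervalIntegral_norm_bounded_left (I := l + 1)
      (fun i => ?_) tendsto_exp_neg_atTop_nhds_zero ?_
    · refine (ContinuousOn.integrableOn_Icc ?_).mono_set Ioc_subset_Icc_self
      exact continuousOn_id.rpow_const fun x hx => Or.inl ((exp_pos (-i)).trans_le hx.1).ne'
    · filter_upwards [hexp.eventually (Ioo_mem_nhdsGT hr),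
        hexp.eventually (hl.eventually (gt_mem_nhds (lt_add_one l)))] with i hi hle
      rw [← integral_of_le hi.2.le]
      refine le_of_eq_of_le (integral_congr fun x hx => ?_) hle.le
      rw [uIcc_of_le hi.2.le] at hx
      exact norm_of_nonneg (rpow_nonneg (hi.1.le.trans hx.1) p)
  exact absurd ((integrableOn_Ioo_rpow_iff hr).1 (hint.mono_set Ioo_subset_Ioc_self)) (by linarith)

theorem exists_norm_le_of_tendsto_nhdsGT {E : Type*} [NormedAddCommGroup E] {g : ℝ → E}
    {a b : ℝ} {c : E} (hg : ContinuousOn g (Ioc a b)) (hlim : Tendsto g (𝓝[>] a) (𝓝 c)) :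
    ∃ C, ∀ x ∈ Ioc a b, ‖g x‖ ≤ C := by
  classical
  have hcont : ContinuousOn (Function.update g a c) (Icc a b) := by
    refine continuousOn_update_iff.2 ⟨by rwa [Icc_sdiff_left], fun _ => ?_⟩
    rw [Icc_sdiff_left]
    exact hlim.mono_left (nhdsWithin_mono _ Ioc_subset_Ioi_self)
  obtain ⟨C, hC⟩ := isCompact_Icc.exists_bound_of_continuousOn hcont
  exact ⟨C, fun x hx => by
    simpa [Function.update_of_ne hx.1.ne'] using hC x (Ioc_subset_Icc_self hx)⟩

theorem exists_norm_rpow_mul_le_of_tendsto {V h : ℝ → ℝ} {a k c r : ℝ}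
    (hV : ContinuousOn V (Ici 0)) (hh : ContinuousOn h (Ioc 0 r))
    (hlim : Tendsto (fun x => x ^ (-k) * h x) (𝓝[>] 0) (𝓝 c)) :
    ∃ C, ∀ τ ∈ Ioc 0 r, ‖τ ^ a * V τ * h τ‖ ≤ C * τ ^ (a + k) := by
  have hV' : ContinuousOn V (Ioc 0 r) := hV.mono fun s hs => hs.1.le
  obtain ⟨C, hC⟩ := exists_norm_le_of_tendsto_nhdsGT
    (hV'.mul ((continuousOn_id.rpow_const fun s hs => Or.inl hs.1.ne').mul hh))
    (((hV 0 self_mem_Ici).tendsto.mono_left (nhdsWithin_mono _ Ioi_subset_Ici_self)).mul hlim)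
  refine ⟨C, fun τ hτ => ?_⟩
  have hτk : τ ^ k * τ ^ (-k) = 1 := by rw [← rpow_add hτ.1, add_neg_cancel, rpow_zero]
  have hsplit : τ ^ a * V τ * h τ = τ ^ (a + k) * (V τ * (τ ^ (-k) * h τ)) := by
    rw [rpow_add hτ.1]
    linear_combination -(τ ^ a * V τ * h τ) * hτk
  rw [hsplit, norm_mul, norm_of_nonneg (rpow_nonneg hτ.1.le _), mul_comm C]
  exact mul_le_mul_of_nonneg_left (hC τ hτ) (rpow_nonneg hτ.1.le _)

theorem exists_eq_add_integral_of_hasDerivAt {F f : ℝ → ℝ} {r : ℝ}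
    (hF : ∀ s ∈ Ioc 0 r, HasDerivAt F (f s) s) (hf : IntegrableOn f (Ioc 0 r)) :
    ∃ L, ∀ s ∈ Ioc 0 r, F s = L + ∫ τ in 0..s, f τ := by
  refine ⟨F r - ∫ τ in 0..r, f τ, fun s hs => ?_⟩
  have hf₁ : IntervalIntegrable f volume 0 s :=
    (intervalIntegrable_iff_integrableOn_Ioc_of_le hs.1.le).2
      (hf.mono_set (Ioc_subset_Ioc_right hs.2))
  have hf₂ : IntervalIntegrable f volume s r :=
    (intervalIntegrable_iff_integrableOn_Ioc_of_le hs.2).2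
      (hf.mono_set (Ioc_subset_Ioc_left hs.1.le))
  have hFTC : ∫ τ in s..r, f τ = F r - F s := by
    refine integral_eq_sub_of_hasDerivAt (fun x hx => hF x ?_) hf₂
    rw [uIcc_of_le hs.2] at hx
    exact ⟨hs.1.trans_le hx.1, hx.2⟩
  rw [← integral_add_adjacent_intervals hf₁ hf₂, hFTC]
  ring

theorem norm_intervalIntegral_le_of_norm_le_rpow {f : ℝ → ℝ} {q C s : ℝ} (hq : 0 < q)
    (hs : 0 ≤ s) (hf : ∀ τ ∈ Ioc 0 s, ‖f τ‖ ≤ C * τ ^ (q - 1)) :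
    ‖∫ τ in 0..s, f τ‖ ≤ C / q * s ^ q := by
  calc ‖∫ τ in 0..s, f τ‖ ≤ ∫ τ in 0..s, C * τ ^ (q - 1) :=
        norm_integral_le_of_norm_le hs (.of_forall hf)
          ((intervalIntegrable_rpow' (r := q - 1) (by linarith)).const_mul C)
    _ = C / q * s ^ q := by
        rw [intervalIntegral.integral_const_mul, integral_rpow (Or.inl (by linarith)),
          sub_add_cancel, zero_rpow hq.ne']
        ring

theorem integrableOn_of_norm_le_rpow {f : ℝ → ℝ} {q C r : ℝ} (hq : 0 < q)
    (hf : ContinuousOn f (Ioc 0 r)) (hbound : ∀ τ ∈ Ioc 0 r, ‖f τ‖ ≤ C * τ ^ (q - 1)) :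
    IntegrableOn f (Ioc 0 r) := by
  have hdom := (intervalIntegrable_rpow' (a := 0) (b := r) (r := q - 1) (by linarith)).const_mul C
  exact (hdom.def'.mono_set Ioc_subset_uIoc).mono' (hf.aestronglyMeasurable measurableSet_Ioc)
    (ae_restrict_of_forall_mem measurableSet_Ioc hbound)

theorem integrableOn_rpow_mul_intervalIntegral {f : ℝ → ℝ} {q C r : ℝ} (hq : 0 < q)
    (hf : ContinuousOn f (Ioc 0 r)) (hbound : ∀ τ ∈ Ioc 0 r, ‖f τ‖ ≤ C * τ ^ (q - 1)) :
    IntegrableOn (fun s => s ^ (1 - q) * ∫ τ in 0..s, f τ) (Ioc 0 r) := by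
  rcases lt_or_ge r 0 with hr | hr
  · simp [Ioc_eq_empty_of_le hr.le]
  have hprim : ContinuousOn (fun s => ∫ τ in 0..s, f τ) (Icc 0 r) := by
    have := continuousOn_primitive_interval (μ := volume) (a := 0) (b := r) (by
      rw [uIcc_of_le hr]
      exact (integrableOn_Icc_iff_integrableOn_Ioc enorm_ne_top).2
        (integrableOn_of_norm_le_rpow hq hf hbound))
    rwa [uIcc_of_le hr] at this
  have hcont : ContinuousOn (fun s => s ^ (1 - q) * ∫ τ in 0..s, f τ) (Ioc 0 r) :=
    (continuousOn_id.rpow_const fun s hs => Or.inl hs.1.ne').mul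
      (hprim.mono Ioc_subset_Icc_self)
  refine (integrableOn_const (μ := volume) (C := |C| / q * r) measure_Ioc_lt_top.ne).mono'
    (hcont.aestronglyMeasurable measurableSet_Ioc)
    (ae_restrict_of_forall_mem measurableSet_Ioc fun s hs => ?_)
  have hprim_le := norm_intervalIntegral_le_of_norm_le_rpow hq hs.1.le
    fun τ hτ => hbound τ ⟨hτ.1, hτ.2.trans hs.2⟩
  have hs' : s ^ (1 - q) * s ^ q = s := by rw [← rpow_add hs.1]; simp
  calc ‖s ^ (1 - q) * ∫ τ in 0..s, f τ‖
      ≤ s ^ (1 - q) * (C / q * s ^ q) := by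
        rw [norm_mul, norm_of_nonneg (rpow_nonneg hs.1.le _)]
        exact mul_le_mul_of_nonneg_left hprim_le (rpow_nonneg hs.1.le _)
    _ = C / q * s := by linear_combination (C / q) * hs'
    _ ≤ |C| / q * r := by gcongr; exacts [hs.1.le, le_abs_self C, hs.2]

theorem eq_add_integral_of_hasDerivAt_rpow_mul {g W : ℝ → ℝ} {p L c r : ℝ} (hp : p ≤ -1)
    (hr : 0 < r) (hg : ∀ s ∈ Ioc 0 r, HasDerivAt g (s ^ p * (L + W s)) s)
    (hint : IntegrableOn (fun s => s ^ p * W s) (Ioc 0 r))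
    (hlim : Tendsto g (𝓝[>] 0) (𝓝 c)) :
    g r = c + ∫ s in Ioc 0 r, s ^ p * W s := by
  have hsplit : ∀ a ∈ Ioo 0 r,
      g r - g a = L * (∫ s in a..r, s ^ p) + ∫ s in a..r, s ^ p * W s := by
    intro a ha
    have hpos : uIcc a r ⊆ Ioc 0 r := by
      rw [uIcc_of_le ha.2.le]
      exact fun x hx => ⟨ha.1.trans_le hx.1, hx.2⟩
    have hpow : IntervalIntegrable (fun s => s ^ p) volume a r :=
      (continuousOn_id.rpow_const fun x hx => Or.inl (hpos hx).1.ne').intervalIntegrable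
    have hW : IntervalIntegrable (fun s => s ^ p * W s) volume a r :=
      (intervalIntegrable_iff_integrableOn_Ioc_of_le ha.2.le).2
        (hint.mono_set (Ioc_subset_Ioc_left ha.1.le))
    rw [← intervalIntegral.integral_const_mul, ← integral_add (hpow.const_mul L) hW]
    refine (integral_eq_sub_of_hasDerivAt (fun x hx => hg x (hpos hx)) ?_).symm.trans ?_
    · exact ((hpow.const_mul L).add hW).congr fun s _ => by ring
    · exact integral_congr fun s _ => by ring
  have hprim : Tendsto (fun a => ∫ s in a..r, s ^ p * W s) (𝓝[>] 0)
      (𝓝 (∫ s in Ioc 0 r, s ^ p * W s)) := by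
    have hcont := continuousOn_primitive_interval_left (a := 0) (b := r) (μ := volume) (by
      rw [uIcc_of_le hr.le]
      exact (integrableOn_Icc_iff_integrableOn_Ioc enorm_ne_top).2 hint)
    rw [uIcc_of_le hr.le] at hcont
    have := (hcont 0 (left_mem_Icc.2 hr.le)).tendsto.mono_left
      (nhdsWithin_le_of_mem (mem_of_superset (Ioc_mem_nhdsGT hr) Ioc_subset_Icc_self))
    rwa [integral_of_le hr.le] at this
  have hL : L = 0 := by
    by_contra hL
    have hdiff : ∀ᶠ a in 𝓝[>] 0,
        g r - g a - ∫ s in a..r, s ^ p * W s = L * ∫ s in a..r, s ^ p := by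
      filter_upwards [Ioo_mem_nhdsGT hr] with a ha
      rw [hsplit a ha]; ring
    have hconv := (((tendsto_const_nhds.sub hlim).sub hprim).congr' hdiff).const_mul L⁻¹
    exact not_tendsto_intervalIntegral_rpow_nhdsGT hp hr
      (hconv.congr fun a => by field_simp)
  have hlim' : Tendsto (fun a => g r - g a) (𝓝[>] 0) (𝓝 (∫ s in Ioc 0 r, s ^ p * W s)) :=
    hprim.congr' (by filter_upwards [Ioo_mem_nhdsGT hr] with a ha; rw [hsplit a ha, hL]; ring)
  linarith [tendsto_nhds_unique (tendsto_const_nhds.sub hlim) hlim']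

theorem exists_hasDerivAt_rpow_neg_mul_of_ode {V h h' h'' : ℝ → ℝ} {n k r : ℝ}
    (hh : ∀ s ∈ Ioc 0 r, HasDerivAt h (h' s) s) (hh' : ∀ s ∈ Ioc 0 r, HasDerivAt h' (h'' s) s)
    (hode : ∀ s ∈ Ioc 0 r,
      h'' s + (n - 1) / s * h' s - (V s + k * (n + k - 2) * s ^ (-2 : ℝ)) * h s = 0)
    (hf : IntegrableOn (fun τ => τ ^ (k + n - 1) * V τ * h τ) (Ioc 0 r)) :
    ∃ L, ∀ s ∈ Ioc 0 r, HasDerivAt (fun x => x ^ (-k) * h x)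
      (s ^ (1 - 2 * k - n) * (L + ∫ τ in 0..s, τ ^ (k + n - 1) * V τ * h τ)) s := by
  obtain ⟨L, hL⟩ := exists_eq_add_integral_of_hasDerivAt (fun s hs =>
    (hasDerivAt_rpow_mul_sub_rpow_mul (n := n) (k := k) hs.1 (hh s hs) (hh' s hs)).congr_deriv
      (by linear_combination s ^ (k + n - 1) * hode s hs)) hf
  exact ⟨L, fun s hs => hL s hs ▸ hasDerivAt_rpow_neg_mul (n := n) hs.1 (hh s hs)⟩

/-- a solution `h` of `h'' + (N-1)/r · h' - (V + ω_k r⁻²) h = 0` on `(0,∞)`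
with `r^{-k} h(r) → 1` as `r → 0⁺` satisfies the Volterra integral equation
`h(r) = r^k (1 + ∫₀^r s^{-2k-N+1} (∫₀^s τ^{k+N-1} V(τ) h(τ) dτ) ds)`,
all integrals being absolutely convergent. -/
theorem stmt_15
    (N k : ℕ) (hN : 2 ≤ N)
    (V : ℝ → ℝ) (hV : ContinuousOn V (Set.Ici 0))
    (h : ℝ → ℝ) (hsmooth : ContDiffOn ℝ 2 h (Set.Ioi 0))
    (hODE : ∀ r : ℝ, 0 < r →
      deriv (deriv h) r + ((N : ℝ) - 1) / r * deriv h r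
        - (V r + (k : ℝ) * ((N : ℝ) + (k : ℝ) - 2) * r ^ (-2 : ℝ)) * h r = 0)
    (hzero : Filter.Tendsto (fun r : ℝ => r ^ (-(k : ℝ)) * h r)
      (nhdsWithin 0 (Set.Ioi 0)) (nhds 1)) :
    ∀ r : ℝ, 0 < r →
      IntegrableOn (fun τ : ℝ => τ ^ ((k : ℝ) + (N : ℝ) - 1) * V τ * h τ) (Set.Ioc 0 r) ∧
      IntegrableOn (fun s : ℝ => s ^ (1 - 2 * (k : ℝ) - (N : ℝ)) *
        ∫ τ in Set.Ioc (0 : ℝ) s, τ ^ ((k : ℝ) + (N : ℝ) - 1) * V τ * h τ) (Set.Ioc 0 r) ∧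
      h r = r ^ (k : ℝ) *
        (1 + ∫ s in Set.Ioc (0 : ℝ) r, s ^ (1 - 2 * (k : ℝ) - (N : ℝ)) *
          ∫ τ in Set.Ioc (0 : ℝ) s, τ ^ ((k : ℝ) + (N : ℝ) - 1) * V τ * h τ) := by
  intro r hr
  have hq : (2 : ℝ) ≤ 2 * k + N := by
    have : (2 : ℝ) ≤ N := by exact_mod_cast hN
    linarith [k.cast_nonneg (α := ℝ)]
  have hh : ∀ s ∈ Ioc 0 r,
      HasDerivAt h (deriv h s) s ∧ HasDerivAt (deriv h) (deriv (deriv h) s) s :=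
    fun s hs => hasDerivAt_deriv_of_contDiffOn_two isOpen_Ioi hsmooth hs.1
  have hcont : ContinuousOn h (Ioc 0 r) := hsmooth.continuousOn.mono Ioc_subset_Ioi_self
  obtain ⟨C, hbound⟩ := exists_norm_rpow_mul_le_of_tendsto (a := k + N - 1) hV hcont hzero
  rw [show (k + N - 1 + k : ℝ) = (2 * k + N) - 1 by ring] at hbound
  have hf : ContinuousOn (fun τ => τ ^ ((k : ℝ) + N - 1) * V τ * h τ) (Ioc 0 r) :=
    ((continuousOn_id.rpow_const fun s hs => Or.inl hs.1.ne').mul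
      (hV.mono fun s hs => hs.1.le)).mul hcont
  have hfint := integrableOn_of_norm_le_rpow (by linarith) hf hbound
  obtain ⟨L, hL⟩ := exists_hasDerivAt_rpow_neg_mul_of_ode (fun s hs => (hh s hs).1)
    (fun s hs => (hh s hs).2) (fun s hs => hODE s hs.1) hfint
  have hGint := integrableOn_rpow_mul_intervalIntegral (by linarith) hf hbound
  rw [show 1 - (2 * k + N : ℝ) = 1 - 2 * k - N by ring] at hGint
  have hinner : ∀ s ∈ Ioc 0 r, ∫ τ in Ioc 0 s, τ ^ ((k : ℝ) + N - 1) * V τ * h τ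
      = ∫ τ in 0..s, τ ^ ((k : ℝ) + N - 1) * V τ * h τ :=
    fun s hs => (integral_of_le hs.1.le).symm
  refine ⟨hfint, hGint.congr_fun (fun s hs => by rw [hinner s hs]) measurableSet_Ioc, ?_⟩
  rw [setIntegral_congr_fun measurableSet_Ioc fun s hs => by rw [hinner s hs],
    ← eq_add_integral_of_hasDerivAt_rpow_mul (by linarith) hr hL hGint hzero,
    ← mul_assoc, ← rpow_add hr, add_neg_cancel, rpow_zero, one_mul]
end

section
/- Let N ≥ 1 be an integer and a ∈ ℝ with 2a + N > 0. Let h(r) := r^a and define, for continuous f : [0,∞) → ℝ, I[f](r) := ∫₀^r s^{1−N} h(s)^{−2} (∫₀^s τ^{N−1} h(τ)² f(τ) dτ) ds, with iterates I^0[f] := f and I^{n+1}[f] := I[I^n[f]]. Then for every n ≥ 1 and every r > 0, I^n[1](r) = c_n r^{2n}, where c_n := ∏_{j=1}^{n} ( (2j)(2a + N + 2j − 2) )^{−1} and 1 denotes the constant function one. -/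
/-- The integral operator `I[f](r) = ∫₀^r s^{1-N} h(s)⁻² (∫₀^s τ^{N-1} h(τ)² f(τ) dτ) ds`
associated with a positive weight `h`. -/
noncomputable def Iop (N : ℕ) (h : ℝ → ℝ) (f : ℝ → ℝ) : ℝ → ℝ :=
  fun r => ∫ s in Set.Ioc (0 : ℝ) r, s ^ (1 - (N : ℝ)) / h s ^ 2 *
    ∫ τ in Set.Ioc (0 : ℝ) s, τ ^ ((N : ℝ) - 1) * h τ ^ 2 * f τ

/-- Iterates of `Iop`: `I^0[f] = f`, `I^{n+1}[f] = I[I^n[f]]`. -/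
noncomputable def Iiter (N : ℕ) (h : ℝ → ℝ) : ℕ → (ℝ → ℝ) → ℝ → ℝ
  | 0, f => f
  | n + 1, f => Iop N h (Iiter N h n f)

open MeasureTheory Real

/-
Against the weight `τ^{N-1} h(τ)² = τ^{N-1+2a}` a power `c τ^p` integrates to
`c s^{N+2a+p} / (N+2a+p)`, and against `s^{1-N} h(s)⁻²` that integrates to
`c r^{p+2} / ((p+2)(N+2a+p))`. So `I` maps powers to powers, raising the exponent by `2`;
starting from `1 = r⁰`, induction on `n` produces the product of the factors
`(2j)(2a+N+2j-2)` with `p = 2j-2`.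
-/

theorem integral_Ioc_zero_rpow {p s : ℝ} (hp : -1 < p) (hs : 0 ≤ s) :
    ∫ τ in Set.Ioc 0 s, τ ^ p = s ^ (p + 1) / (p + 1) := by
  rw [← intervalIntegral.integral_of_le hs, integral_rpow (Or.inl hp),
    zero_rpow (by linarith), sub_zero]

section PowerWeight

variable (N : ℕ) {a p c : ℝ} {f : ℝ → ℝ}

theorem setIntegral_Ioc_zero_powerWeight_mul (hD : 0 < N + 2 * a + p)
    (hf : ∀ τ, 0 < τ → f τ = c * τ ^ p) {s : ℝ} (hs : 0 ≤ s) :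
    ∫ τ in Set.Ioc 0 s, τ ^ ((N : ℝ) - 1) * (τ ^ a) ^ 2 * f τ
      = c / (N + 2 * a + p) * s ^ (N + 2 * a + p) := by
  have hpow : ∀ τ ∈ Set.Ioc (0 : ℝ) s,
      τ ^ ((N : ℝ) - 1) * (τ ^ a) ^ 2 * f τ = c * τ ^ (N + 2 * a + p - 1) := by
    rintro τ ⟨hτ, -⟩
    rw [hf τ hτ, ← rpow_natCast, ← rpow_mul hτ.le,
      show N + 2 * a + p - 1 = (N - 1) + a * (2 : ℕ) + p by push_cast; ring,
      rpow_add hτ, rpow_add hτ]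
    ring
  rw [setIntegral_congr_fun measurableSet_Ioc hpow, integral_const_mul,
    integral_Ioc_zero_rpow (by linarith) hs, sub_add_cancel]
  ring

theorem Iop_powerWeight_rpow (hD : 0 < N + 2 * a + p) (hp : -2 < p)
    (hf : ∀ τ, 0 < τ → f τ = c * τ ^ p) {r : ℝ} (hr : 0 ≤ r) :
    Iop N (fun s => s ^ a) f r = c / ((p + 2) * (N + 2 * a + p)) * r ^ (p + 2) := by
  have hpow : ∀ s ∈ Set.Ioc (0 : ℝ) r,
      s ^ (1 - (N : ℝ)) / (s ^ a) ^ 2 *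
          ∫ τ in Set.Ioc 0 s, τ ^ ((N : ℝ) - 1) * (τ ^ a) ^ 2 * f τ
        = c / (N + 2 * a + p) * s ^ (p + 1) := by
    rintro s ⟨hs, -⟩
    have hexp : s ^ (p + 1)
        = s ^ (1 - (N : ℝ)) * s ^ (-(a * (2 : ℕ))) * s ^ (N + 2 * a + p) := by
      rw [← rpow_add hs, ← rpow_add hs]
      push_cast
      ring_nf
    rw [setIntegral_Ioc_zero_powerWeight_mul N hD hf hs.le, hexp, rpow_neg hs.le, rpow_mul hs.le,
      rpow_natCast]
    ring
  rw [Iop, setIntegral_congr_fun measurableSet_Ioc hpow, integral_const_mul,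
    integral_Ioc_zero_rpow (by linarith) hr, show p + 1 + 1 = p + 2 by ring, mul_comm (p + 2),
    ← div_div]
  ring

theorem Iiter_powerWeight_one (ha : 0 < 2 * a + N) (n : ℕ) {r : ℝ} (hr : 0 < r) :
    Iiter N (fun s : ℝ => s ^ a) n (fun _ => 1) r
      = (∏ j ∈ Finset.Icc 1 n, ((2 * (j : ℝ)) * (2 * a + N + 2 * (j : ℝ) - 2))⁻¹)
          * r ^ (2 * (n : ℝ)) := by
  induction n generalizing r with
  | zero => simp [Iiter]
  | succ n ih =>
    have hn : (0 : ℝ) ≤ n := n.cast_nonneg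
    rw [Iiter, Iop_powerWeight_rpow N (by linarith) (by linarith) (fun τ hτ => ih hτ) hr.le,
      Finset.prod_Icc_succ_top (by omega), div_eq_mul_inv,
      show (2 * n + 2) * (N + 2 * a + 2 * n)
          = 2 * ((n + 1 : ℕ) : ℝ) * (2 * a + N + 2 * ((n + 1 : ℕ) : ℝ) - 2) by push_cast; ring,
      show 2 * (n : ℝ) + 2 = 2 * ((n + 1 : ℕ) : ℝ) by push_cast; ring]

end PowerWeight

theorem stmt_18_general (N : ℕ) (a : ℝ) (ha : 0 < 2 * a + N) :
    ∀ n : ℕ, 1 ≤ n → ∀ r : ℝ, 0 < r →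
      Iiter N (fun s : ℝ => s ^ a) n (fun _ => 1) r
        = (∏ j ∈ Finset.Icc 1 n, ((2 * (j : ℝ)) * (2 * a + N + 2 * (j : ℝ) - 2))⁻¹)
            * r ^ (2 * n) := by
  intro n _ r hr
  exact_mod_cast Iiter_powerWeight_one N ha n hr

/-- for the power weight `h(r) = r^a` with `2a + N > 0`, the iterates of the
integral operator applied to the constant function `1` satisfy
`I^n[1](r) = (∏_{j=1}^n ((2j)(2a+N+2j-2))⁻¹) r^{2n}` for all `n ≥ 1` and `r > 0`. -/
theorem stmt_18 (N : ℕ) (hN : 1 ≤ N) (a : ℝ) (ha : 0 < 2 * a + N) :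
    ∀ n : ℕ, 1 ≤ n → ∀ r : ℝ, 0 < r →
      Iiter N (fun s : ℝ => s ^ a) n (fun _ => 1) r
        = (∏ j ∈ Finset.Icc 1 n, ((2 * (j : ℝ)) * (2 * a + N + 2 * (j : ℝ) - 2))⁻¹)
            * r ^ (2 * n) :=
  stmt_18_general N a ha
end
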